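/- arXiv:1712.03717 — 6 statements merged into one kernel-verified Lean document; each statement's English description precedes it below -/
import Mathlib

section
/- Let P be a locally finite ranked poset with a special matching M, and let u, v ∈ P with u ≤ v. If M(v) ⋖ v (M(v) is covered by v) and M(u) ⋖ u, then M(u) ≤ M(v). -/
/-!
Induct on `v`. Pick `w` with `u ≤ w ⋖ v`. If `w = M v` then `M u ≤ u ≤ M v`. Otherwise `w` is
matched downwards too: were `w ⋖ M w`, speciality would give `M w ≤ M v`, although `M w` has the
rank of `v`, one more than that of `M v`. Then `M u ≤ M w` by induction and `M w ≤ M v` by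
speciality.
-/

structure IsSpecialMatching {P : Type*} [PartialOrder P] (M : P → P) : Prop where
  involutive : Function.Involutive M
  covBy_or_covBy : ∀ v, M v ⋖ v ∨ v ⋖ M v
  le_of_covBy : ∀ u v, u ⋖ v → M u ≠ v → M u ≤ M v

namespace IsSpecialMatching

variable {P : Type*} [PartialOrder P] [GradeOrder ℕ P] {M : P → P}

theorem apply_covBy_of_covBy (hM : IsSpecialMatching M) {w v : P} (hwv : w ⋖ v)
    (hMv : M v ⋖ v) (hw : w ≠ M v) : M w ⋖ w := by
  refine (hM.covBy_or_covBy w).resolve_right fun hwMw => ?_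
  have hMwv : M w ≠ v := fun h => hw (by rw [← h, hM.involutive w])
  have hgrade : grade ℕ (M w) ≤ grade ℕ (M v) := grade_mono (hM.le_of_covBy w v hwv hMwv)
  have h₁ := Nat.covBy_iff_add_one_eq.1 (hwMw.grade ℕ)
  have h₂ := Nat.covBy_iff_add_one_eq.1 (hwv.grade ℕ)
  have h₃ := Nat.covBy_iff_add_one_eq.1 (hMv.grade ℕ)
  omega

theorem apply_le_apply_of_le [IsStronglyCoatomic P] (hM : IsSpecialMatching M) {u v : P}
    (huv : u ≤ v) (hMv : M v ⋖ v) (hMu : M u ⋖ u) : M u ≤ M v := by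
  induction v using WellFoundedLT.induction with
  | _ v ih =>
  rcases huv.eq_or_lt with rfl | huv
  · exact le_rfl
  obtain ⟨w, huw, hwv⟩ := exists_le_covBy_of_lt huv
  by_cases hw : w = M v
  · exact hMu.le.trans (hw ▸ huw)
  have hMw := hM.apply_covBy_of_covBy hwv hMv hw
  exact (ih w hwv.lt huw hMw).trans (hM.le_of_covBy w v hwv (hMw.lt.trans hwv.lt).ne)

end IsSpecialMatching

theorem lifting_property_general {P : Type*} [PartialOrder P] [LocallyFiniteOrder P]
    (ρ : P → ℕ) (hρ : ∀ x y : P, x ⋖ y → ρ y = ρ x + 1)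
    (M : P → P) (hinv : Function.Involutive M)
    (hmatch : ∀ v : P, M v ⋖ v ∨ v ⋖ M v)
    (hspecial : ∀ u v : P, u ⋖ v → M u ≠ v → M u ≤ M v)
    (u v : P) (huv : u ≤ v)
    (hMv : M v ⋖ v) (hMu : M u ⋖ u) : M u ≤ M v := by
  let _ : GradeOrder ℕ P :=
    { grade := ρ
      grade_strictMono := (strictMono_iff_forall_covBy ρ).2 fun x y h => by
        rw [hρ x y h]; exact Nat.lt_succ_self _
      covBy_grade := fun x y h => Nat.covBy_iff_add_one_eq.2 (hρ x y h).symm }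
  exact IsSpecialMatching.apply_le_apply_of_le ⟨hinv, hmatch, hspecial⟩ huv hMv hMu

/-- Lifting property for special matchings of a locally finite ranked poset.
`P` is a locally finite graded poset with minimum and rank function `ρ`;
`M` is a matching of the Hasse diagram of `P` (an involution matching each
element with one covering it or covered by it), and `M` is special:
`u ⋖ v` and `M u ≠ v` imply `M u ≤ M v`. -/
theorem lifting_property {P : Type*} [PartialOrder P] [LocallyFiniteOrder P] [OrderBot P]
    (ρ : P → ℕ) (hρ_bot : ρ ⊥ = 0) (hρ : ∀ x y : P, x ⋖ y → ρ y = ρ x + 1)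
    (M : P → P) (hinv : Function.Involutive M)
    (hmatch : ∀ v : P, M v ⋖ v ∨ v ⋖ M v)
    (hspecial : ∀ u v : P, u ⋖ v → M u ≠ v → M u ≤ M v)
    (u v : P) (huv : u ≤ v)
    (hMv : M v ⋖ v) (hMu : M u ⋖ u) : M u ≤ M v :=
  lifting_property_general ρ hρ M hinv hmatch hspecial u v huv hMv hMu
end

section
/- Let (W,S) be a Coxeter system, w ∈ W, and s ∈ S a right descent of w (i.e., ℓ(ws) < ℓ(w)). Then the map ρ_s : [e,w] → [e,w] defined by ρ_s(u) = us is a special matching of the Bruhat interval [e,w]. -/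
/-!
Everything rests on the strong exchange condition. It comes from the action of `W` on
`W × ZMod 2` in which `s i` conjugates the first coordinate and flips the parity exactly
at `s i`: a word `ω` moves `(x, a)` to `(π ω x (π ω)⁻¹, a + #{occurrences of x in ris ω})`,
so the parity of that count depends only on `π ω`. The braid relations hold because the
inversion sequence of the word `(s i s j)^m` with `m = M i j` is one list repeated twice.
Writing `w` as `(w t) t` then shows that a reflection `t` with `ℓ (w t) < ℓ w` occurs in the
right inversion sequence of every word for `w`.

Exchange gives the diamond lemma, hence monotonicity of left multiplication by an ascent,
hence the subword property of Bruhat order, hence Deodhar's lifting property: if `s` is a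
descent of `v` but not of `u ≤ v`, then `us ≤ v` and `u ≤ vs`. The matching properties of
`u ↦ us` follow by cases on whether `s` is a descent of `u` and of `v`.
-/

open CoxeterSystem

variable {B W : Type*} [Group W] {Cm : CoxeterMatrix B} (cs : CoxeterSystem Cm W)

/-- Bruhat order on the Coxeter group `W`: the reflexive-transitive closure of the
relation "multiply on the right by a reflection, increasing the length". -/
def bruhatLE : W → W → Prop :=
  Relation.ReflTransGen (fun u v => (∃ t, cs.IsReflection t ∧ v = u * t) ∧
    cs.length u < cs.length v)

/-- The covering relation of Bruhat order: `u ⋖ v` iff `u⁻¹v` is a reflection and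
`ℓ(v) = ℓ(u) + 1`. -/
def bruhatCovBy (u v : W) : Prop :=
  cs.IsReflection (u⁻¹ * v) ∧ cs.length v = cs.length u + 1

/-- The standard parabolic subgroup `W_J` generated by the simple reflections
indexed by `J`. -/
def parabolic (J : Set B) : Subgroup W := Subgroup.closure (cs.simple '' J)

/-- `w` belongs to the set `W^J` of minimal length coset representatives of `W/W_J`. -/
def isMinimalRight (J : Set B) (w : W) : Prop := ∀ j ∈ J, ¬ cs.IsRightDescent w j

/-- `w` belongs to the set `^J W` of minimal length coset representatives of `W_J\W`. -/
def isMinimalLeft (J : Set B) (w : W) : Prop := ∀ j ∈ J, ¬ cs.IsLeftDescent w j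


section

open List

local prefix:100 "s" => cs.simple
local prefix:100 "π" => cs.wordProd
local prefix:100 "ℓ" => cs.length
local prefix:100 "ris " => cs.rightInvSeq
local prefix:100 "lis " => cs.leftInvSeq

namespace CoxeterSystem

theorem simple_mul_mul_simple_eq_simple_iff (i : B) (y : W) : s i * y * s i = s i ↔ y = s i := by
  rw [← mul_left_inj (s i), mul_assoc, simple_mul_simple_self, mul_one, ← mul_right_inj (s i),
    ← mul_assoc, simple_mul_simple_self, one_mul, mul_one]

noncomputable section SignedConj

open scoped Classical

def simpleSignedConj (i : B) : Equiv.Perm (W × ZMod 2) :=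
  Function.Involutive.toPerm (fun p ↦ (s i * p.1 * s i, p.2 + if p.1 = s i then 1 else 0)) <| by
    rintro ⟨y, a⟩
    refine Prod.ext ?_ ?_
    · simp only [mul_assoc, simple_mul_simple_self, mul_one]
      rw [← mul_assoc, simple_mul_simple_self, one_mul]
    · dsimp only
      rw [simple_mul_mul_simple_eq_simple_iff, add_assoc, CharTwo.add_self_eq_zero, add_zero]

theorem simpleSignedConj_apply (i : B) (y : W) (a : ZMod 2) :
    cs.simpleSignedConj i (y, a) = (s i * y * s i, a + if y = s i then 1 else 0) := rfl

theorem prod_map_simpleSignedConj_apply (ω : List B) (x : W) (a : ZMod 2) :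
    (ω.map cs.simpleSignedConj).prod (x, a) =
      (π ω * x * (π ω)⁻¹, a + ((ris ω).count x : ZMod 2)) := by
  induction ω with
  | nil => simp
  | cons i ω ih =>
    have hconj : (π ω)⁻¹ * s i * π ω = x ↔ π ω * x * (π ω)⁻¹ = s i := by
      constructor
      · rintro rfl; group
      · intro h; rw [← h]; group
    rw [map_cons, prod_cons, Equiv.Perm.mul_apply, ih, simpleSignedConj_apply, rightInvSeq.eq_2,
      count_cons, wordProd_cons]
    simp only [beq_iff_eq, hconj]
    simp only [Nat.cast_add, Nat.cast_ite, Nat.cast_one, Nat.cast_zero,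
      mul_inv_rev, inv_simple, mul_assoc, add_assoc]

theorem prod_map_alternatingWord_two_mul {G : Type*} [Monoid G] (f : B → G) (i j : B) (m : ℕ) :
    ((alternatingWord i j (2 * m)).map f).prod = (f i * f j) ^ m := by
  induction m with
  | zero => simp [alternatingWord]
  | succ m ih =>
    rw [show 2 * (m + 1) = 2 * m + 1 + 1 by ring, alternatingWord_succ', alternatingWord_succ',
      if_neg (Nat.not_even_two_mul_add_one m), if_pos (even_two_mul m)]
    simp only [map_cons, prod_cons, ih, pow_succ', mul_assoc]

theorem rightInvSeq_eq_leftInvSeq_of_wordProd_eq_one {ω : List B} (h : π ω = 1) :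
    ris ω = lis ω := by
  refine ext_getElem (by simp) fun j hj _ ↦ ?_
  have := (cs.wordProd_mul_getD_rightInvSeq ω j).trans (cs.getD_leftInvSeq_mul_wordProd ω j).symm
  rwa [h, one_mul, mul_one, getD_eq_getElem _ _ hj, getD_eq_getElem] at this

theorem leftInvSeq_alternatingWord_two_mul (i j : B) (p : ℕ) :
    lis (alternatingWord i j (2 * p)) =
      (range (2 * p)).map fun k ↦ π (alternatingWord j i (2 * k + 1)) :=
  ext_getElem (by simp) fun k hk _ ↦ by
    rw [getElem_leftInvSeq_alternatingWord cs i j p k (by simpa using hk), getElem_map,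
      getElem_range]

theorem periodic_wordProd_alternatingWord_odd (i j : B) :
    Function.Periodic (fun k ↦ π (alternatingWord j i (2 * k + 1))) (Cm i j) := fun k ↦ by
  simp only [prod_alternatingWord_eq_mul_pow, Nat.not_even_two_mul_add_one, if_false,
    show ∀ n, (2 * n + 1) / 2 = n by omega, pow_add, simple_mul_simple_pow', mul_one]

theorem exists_leftInvSeq_alternatingWord_two_mul_eq_append_self (i j : B) :
    ∃ l, lis (alternatingWord i j (2 * Cm i j)) = l ++ l := by
  refine ⟨(range (Cm i j)).map fun k ↦ π (alternatingWord j i (2 * k + 1)), ?_⟩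
  rw [leftInvSeq_alternatingWord_two_mul, two_mul, range_add, map_append, map_map]
  congr 1
  exact map_congr_left fun k _ ↦ by
    simpa [add_comm] using periodic_wordProd_alternatingWord_odd cs i j k

theorem isLiftable_simpleSignedConj : Cm.IsLiftable cs.simpleSignedConj := by
  intro i j
  have hπ : π (alternatingWord i j (2 * Cm i j)) = 1 := by
    rw [prod_alternatingWord_eq_mul_pow, if_pos (even_two_mul _), Nat.mul_div_cancel_left _ two_pos,
      one_mul, simple_mul_simple_pow]
  obtain ⟨l, hl⟩ := cs.exists_leftInvSeq_alternatingWord_two_mul_eq_append_self i j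
  ext ⟨x, a⟩ : 1
  rw [← prod_map_alternatingWord_two_mul, prod_map_simpleSignedConj_apply, hπ,
    rightInvSeq_eq_leftInvSeq_of_wordProd_eq_one cs hπ, hl]
  simp [count_append, CharTwo.add_self_eq_zero]

def signedConj : W →* Equiv.Perm (W × ZMod 2) :=
  cs.lift ⟨cs.simpleSignedConj, cs.isLiftable_simpleSignedConj⟩

theorem signedConj_wordProd_apply (ω : List B) (x : W) (a : ZMod 2) :
    cs.signedConj (π ω) (x, a) = (π ω * x * (π ω)⁻¹, a + ((ris ω).count x : ZMod 2)) := by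
  rw [← prod_map_simpleSignedConj_apply, signedConj, wordProd, map_list_prod, map_map]
  congr 2
  exact map_congr_left fun i _ ↦ cs.lift_apply_simple _ i

def inversionParity (w x : W) : ZMod 2 := (cs.signedConj w (x, 0)).2

theorem signedConj_apply (w x : W) (a : ZMod 2) :
    cs.signedConj w (x, a) = (w * x * w⁻¹, a + cs.inversionParity w x) := by
  obtain ⟨ω, rfl⟩ := cs.wordProd_surjective w
  simp [inversionParity, signedConj_wordProd_apply]

theorem inversionParity_wordProd (ω : List B) (x : W) :
    cs.inversionParity (π ω) x = (ris ω).count x := by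
  simp [inversionParity, signedConj_wordProd_apply]

theorem inversionParity_one (x : W) : cs.inversionParity 1 x = 0 := by
  simp [inversionParity]

theorem inversionParity_mul (u v x : W) :
    cs.inversionParity (u * v) x =
      cs.inversionParity v x + cs.inversionParity u (v * x * v⁻¹) := by
  have h := cs.signedConj_apply (u * v) x 0
  rw [map_mul, Equiv.Perm.mul_apply, signedConj_apply, signedConj_apply] at h
  simpa using (congrArg Prod.snd h).symm

theorem IsReflection.inversionParity_self {t : W} (ht : cs.IsReflection t) :
    cs.inversionParity t t = 1 := by
  obtain ⟨u, k, rfl⟩ := ht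
  have hsimple : cs.inversionParity (s k) (s k) = 1 := by
    rw [← wordProd_singleton, inversionParity_wordProd]
    simp
  have hcancel : cs.inversionParity u (s k) + cs.inversionParity u⁻¹ (u * s k * u⁻¹) = 0 := by
    rw [← inversionParity_mul, inv_mul_cancel, inversionParity_one]
  have hsplit : cs.inversionParity (u * s k * u⁻¹) (u * s k * u⁻¹) =
      cs.inversionParity u⁻¹ (u * s k * u⁻¹) +
        (cs.inversionParity (s k) (s k) + cs.inversionParity u (s k)) := by
    rw [inversionParity_mul, inversionParity_mul]
    simp [mul_assoc, simple_mul_simple_self]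
  linear_combination hsplit + hcancel + hsimple

theorem mem_rightInvSeq_of_length_mul_lt {ω : List B} {t : W} (ht : cs.IsReflection t)
    (hlt : ℓ (π ω * t) < ℓ (π ω)) : t ∈ ris ω := by
  obtain ⟨ω', hω', hω'eq⟩ := cs.exists_isReduced (π ω * t)
  have hnot : t ∉ ris ω' := fun hmem ↦ by
    have := (cs.isRightInversion_of_mem_rightInvSeq hω' hmem).2
    rw [← hω'eq, mul_assoc, ht.mul_self, mul_one] at this
    omega
  have hpar : cs.inversionParity (π ω) t = 1 := by
    calc cs.inversionParity (π ω) t = cs.inversionParity (π ω * t * t) t := by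
          rw [mul_assoc, ht.mul_self, mul_one]
      _ = cs.inversionParity t t + cs.inversionParity (π ω * t) (t * t * t⁻¹) :=
          cs.inversionParity_mul _ _ _
      _ = 1 := by
          rw [ht.inversionParity_self, mul_inv_cancel_right, hω'eq, inversionParity_wordProd,
            count_eq_zero.mpr hnot, Nat.cast_zero, add_zero]
  rw [inversionParity_wordProd] at hpar
  exact count_pos_iff.mp (Nat.pos_of_ne_zero fun h ↦ by simp [h] at hpar)

end SignedConj

theorem exists_wordProd_eraseIdx_eq_mul {ω : List B} {t : W} (ht : cs.IsReflection t)
    (hlt : ℓ (π ω * t) < ℓ (π ω)) : ∃ j, π (ω.eraseIdx j) = π ω * t := by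
  obtain ⟨j, hj, rfl⟩ := mem_iff_getElem.mp (cs.mem_rightInvSeq_of_length_mul_lt ht hlt)
  exact ⟨j, by rw [← wordProd_mul_getD_rightInvSeq, getD_eq_getElem]⟩

end CoxeterSystem

variable {cs}

theorem bruhatLE_refl (u : W) : bruhatLE cs u u := Relation.ReflTransGen.refl

theorem bruhatLE.trans {u v w : W} (huv : bruhatLE cs u v) (hvw : bruhatLE cs v w) :
    bruhatLE cs u w :=
  Relation.ReflTransGen.trans huv hvw

theorem bruhatLE_mul_of_length_lt {u t : W} (ht : cs.IsReflection t) (h : ℓ u < ℓ (u * t)) :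
    bruhatLE cs u (u * t) :=
  Relation.ReflTransGen.single ⟨⟨t, ht, rfl⟩, h⟩

theorem mul_bruhatLE_of_length_lt {u t : W} (ht : cs.IsReflection t) (h : ℓ (u * t) < ℓ u) :
    bruhatLE cs (u * t) u :=
  Relation.ReflTransGen.single ⟨⟨t, ht, by rw [mul_assoc, ht.mul_self, mul_one]⟩, h⟩

theorem bruhatLE_simple_mul_of_length_lt {y : W} {k : B} (h : ℓ y < ℓ (s k * y)) :
    bruhatLE cs y (s k * y) := by
  have hconj : s k * y = y * (y⁻¹ * s k * y) := by group
  rw [hconj] at h ⊢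
  exact bruhatLE_mul_of_length_lt (by simpa using (cs.isReflection_simple k).conj y⁻¹) h

theorem bruhatLE.length_le {u v : W} (h : bruhatLE cs u v) : ℓ u ≤ ℓ v := by
  induction h with
  | refl => rfl
  | tail _ hstep ih => exact ih.trans hstep.2.le

theorem bruhatLE.eq_of_length_le {u v : W} (h : bruhatLE cs u v) (hl : ℓ v ≤ ℓ u) :
    u = v := by
  rcases (Relation.ReflTransGen.cases_tail_iff _ _ _).mp h with rfl | ⟨x, hux, hstep⟩
  · rfl
  · exact absurd hl (not_le.mpr ((bruhatLE.length_le hux).trans_lt hstep.2))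

theorem bruhatCovBy.le {u v : W} (h : bruhatCovBy cs u v) : bruhatLE cs u v := by
  simpa using bruhatLE_mul_of_length_lt (u := u) h.1 (by simp [h.2])

theorem simple_mul_eq_mul_of_length_lt {v t : W} {k : B} (ht : cs.IsReflection t)
    (hup : ℓ v < ℓ (v * t)) (hdown : ℓ (s k * v * t) < ℓ (s k * v)) : s k * v = v * t := by
  obtain ⟨σ, hσ, rfl⟩ := cs.exists_isReduced v
  rw [← wordProd_cons] at hdown
  obtain ⟨j, hj⟩ := cs.exists_wordProd_eraseIdx_eq_mul ht hdown
  rw [wordProd_cons] at hj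
  cases j with
  | zero =>
    rw [eraseIdx_cons_zero] at hj
    calc s k * π σ = s k * π σ * t * t := by rw [mul_assoc _ t t, ht.mul_self, mul_one]
      _ = π σ * t := by rw [← hj]
  | succ j =>
    rw [eraseIdx_cons_succ, wordProd_cons, mul_assoc, mul_right_inj] at hj
    have hle : ℓ (π σ * t) ≤ σ.length :=
      hj ▸ (cs.length_wordProd_le _).trans (length_eraseIdx_le σ j)
    rw [hσ.eq] at hup
    omega

theorem bruhatLE.simple_mul_mono {v y : W} {k : B} (h : bruhatLE cs v y)
    (hy : ℓ y < ℓ (s k * y)) : bruhatLE cs (s k * v) (s k * y) := by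
  induction h using Relation.ReflTransGen.head_induction_on with
  | refl => exact bruhatLE_refl _
  | head hstep hrest ih =>
    obtain ⟨⟨t, ht, rfl⟩, hlt⟩ := hstep
    rcases lt_or_gt_of_ne (ht.length_mul_left_ne (s k * _)) with hdown | hup
    · rw [simple_mul_eq_mul_of_length_lt ht hlt hdown]
      exact hrest.trans (bruhatLE_simple_mul_of_length_lt hy)
    · exact (bruhatLE_mul_of_length_lt ht hup).trans (by rwa [mul_assoc])

theorem bruhatLE_wordProd_of_sublist {α β : List B} (hα : cs.IsReduced α) (h : β <+ α) :
    bruhatLE cs (π β) (π α) := by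
  induction α generalizing β with
  | nil => rw [sublist_nil.mp h]; exact bruhatLE_refl _
  | cons k α ih =>
    have hα' : cs.IsReduced α := by simpa using hα.drop 1
    have hasc : ℓ (π α) < ℓ (s k * π α) := by
      have hlen := hα.eq
      rw [wordProd_cons, length_cons] at hlen
      rw [hlen, hα'.eq]
      exact lt_add_one _
    rcases sublist_cons_iff.mp h with hβ | ⟨β', rfl, hβ'⟩
    · rw [wordProd_cons]
      exact (ih hα' hβ).trans (bruhatLE_simple_mul_of_length_lt hasc)
    · rw [wordProd_cons, wordProd_cons]
      exact (ih hα' hβ').simple_mul_mono hasc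

theorem bruhatLE.exists_sublist {u : W} {ω : List B} (h : bruhatLE cs u (π ω)) :
    ∃ β, β <+ ω ∧ π β = u := by
  induction h using Relation.ReflTransGen.head_induction_on with
  | refl => exact ⟨ω, Sublist.refl ω, rfl⟩
  | head hstep _ ih =>
    obtain ⟨⟨t, ht, rfl⟩, hlt⟩ := hstep
    obtain ⟨β, hβ, hβeq⟩ := ih
    have hdown : ℓ (π β * t) < ℓ (π β) := by
      rwa [hβeq, mul_assoc, ht.mul_self, mul_one]
    obtain ⟨j, hj⟩ := cs.exists_wordProd_eraseIdx_eq_mul ht hdown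
    exact ⟨β.eraseIdx j, (eraseIdx_sublist β j).trans hβ, by
      rw [hj, hβeq, mul_assoc, ht.mul_self, mul_one]⟩

theorem bruhatLE_lifting {u v : W} {i : B} (hv : ℓ (v * s i) < ℓ v) (hu : ℓ u < ℓ (u * s i))
    (h : bruhatLE cs u v) : bruhatLE cs (u * s i) v ∧ bruhatLE cs u (v * s i) := by
  obtain ⟨σ, hσ, hσeq⟩ := cs.exists_isReduced (v * s i)
  have hv' : v = π (σ ++ [i]) := by
    rw [wordProd_append, wordProd_singleton, ← hσeq, mul_assoc, simple_mul_simple_self, mul_one]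
  have hred : cs.IsReduced (σ ++ [i]) := by
    have hσlen := hσ.eq
    rw [← hσeq] at hσlen
    have := cs.length_mul_simple v i
    change ℓ (π (σ ++ [i])) = (σ ++ [i]).length
    rw [← hv', length_append, length_singleton]
    omega
  have hvdown : bruhatLE cs (v * s i) v := mul_bruhatLE_of_length_lt (cs.isReflection_simple i) hv
  obtain ⟨β, hβ, rfl⟩ := (hv' ▸ h : bruhatLE cs u (π (σ ++ [i]))).exists_sublist
  obtain ⟨β₁, β₂, rfl, hβ₁, hβ₂⟩ := sublist_append_iff.mp hβ
  have hβ₁le : bruhatLE cs (π β₁) (v * s i) :=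
    hσeq ▸ bruhatLE_wordProd_of_sublist hσ hβ₁
  rcases sublist_singleton.mp hβ₂ with rfl | rfl
  · rw [append_nil] at hu ⊢
    refine ⟨?_, hβ₁le⟩
    rw [hv', ← wordProd_singleton, ← wordProd_append]
    exact bruhatLE_wordProd_of_sublist hred (hβ₁.append (Sublist.refl [i]))
  · have hcancel : π (β₁ ++ [i]) * s i = π β₁ := by
      rw [wordProd_append, wordProd_singleton, mul_assoc, simple_mul_simple_self, mul_one]
    have hup := bruhatLE_mul_of_length_lt (cs.isReflection_simple i) hu
    rw [hcancel] at hup ⊢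
    exact ⟨hβ₁le.trans hvdown, hup.trans hβ₁le⟩

theorem bruhatLE.mul_simple_of_isRightDescent {u v : W} {i : B} (h : bruhatLE cs u v)
    (hv : cs.IsRightDescent v i) : bruhatLE cs (u * s i) v := by
  rcases cs.length_mul_simple u i with hu | hu
  · exact (bruhatLE_lifting hv (by omega) h).1
  · exact (mul_bruhatLE_of_length_lt (cs.isReflection_simple i) (by omega)).trans h

theorem bruhatCovBy_mul_simple_or (u : W) (i : B) :
    bruhatCovBy cs (u * s i) u ∨ bruhatCovBy cs u (u * s i) := by
  rcases cs.length_mul_simple u i with h | h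
  · exact Or.inr ⟨by simpa using cs.isReflection_simple i, h⟩
  · refine Or.inl ⟨?_, h.symm⟩
    simpa [mul_inv_rev, inv_simple] using cs.isReflection_simple i

theorem bruhatCovBy.mul_simple_le {u v : W} {i : B} (hcov : bruhatCovBy cs u v)
    (hne : u * s i ≠ v) : bruhatLE cs (u * s i) (v * s i) := by
  have huv := hcov.le
  have hsi := cs.isReflection_simple i
  have hlen := hcov.2
  rcases cs.length_mul_simple u i with hu | hu <;> rcases cs.length_mul_simple v i with hv | hv
  · have hvs : ℓ (v * s i * s i) < ℓ (v * s i) := by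
      rw [mul_assoc, simple_mul_simple_self, mul_one]; omega
    exact (huv.trans (bruhatLE_mul_of_length_lt hsi (by omega))).mul_simple_of_isRightDescent hvs
  · exact absurd ((bruhatLE_lifting (by omega) (by omega) huv).1.eq_of_length_le (by omega)) hne
  · exact (mul_bruhatLE_of_length_lt hsi (by omega)).trans
      (huv.trans (bruhatLE_mul_of_length_lt hsi (by omega)))
  · have hus : ℓ (u * s i) < ℓ (u * s i * s i) := by
      rw [mul_assoc, simple_mul_simple_self, mul_one]; omega
    exact (bruhatLE_lifting (by omega) hus ((mul_bruhatLE_of_length_lt hsi (by omega)).trans huv)).2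

end

/-- If `s` is a right descent of `w`, then `ρ_s : u ↦ us` is a special matching of the
lower Bruhat interval `[e,w]`: it maps the interval to itself, each `{u, us}` is a
covering pair (a Hasse diagram edge), and `u ⋖ v`, `ρ_s u ≠ v` imply `ρ_s u ≤ ρ_s v`.
(It is clearly an involution.) -/
theorem rho_is_special_matching (w : W) (i : B) (hi : cs.IsRightDescent w i) :
    (∀ u : W, bruhatLE cs u w → bruhatLE cs (u * cs.simple i) w) ∧
    (∀ u : W, bruhatLE cs u w →
      bruhatCovBy cs (u * cs.simple i) u ∨ bruhatCovBy cs u (u * cs.simple i)) ∧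
    (∀ u v : W, bruhatLE cs u w → bruhatLE cs v w → bruhatCovBy cs u v →
      u * cs.simple i ≠ v → bruhatLE cs (u * cs.simple i) (v * cs.simple i)) :=
  ⟨fun _ hu ↦ hu.mul_simple_of_isRightDescent hi,
    fun u _ ↦ bruhatCovBy_mul_simple_or u i,
    fun _ _ _ _ hcov hne ↦ hcov.mul_simple_le hne⟩
end

section
/- Let (W,S) be a Coxeter system, J ⊆ S, and w ∈ W. Then the set W_J ∩ [e,w] (elements of the parabolic subgroup W_J that are ≤ w in Bruhat order) has a unique maximal element w₀(J); consequently W_J ∩ [e,w] is the Bruhat interval [e, w₀(J)]. -/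
open CoxeterSystem

variable {B W : Type*} [Group W] {Cm : CoxeterMatrix B} (cs : CoxeterSystem Cm W)

/-!
Induct on `ℓ(w)`. For `w = 1` take `w₀(J) = 1`. Otherwise pick a left descent `s` of `w` and let
`z` be the maximum of `W_J ∩ [e, sw]`. The maximum for `w` is `sz` if `s ∈ W_J` and `z < sz`, and
`z` otherwise; checking this only needs that `W_J` is a lower set for Bruhat order and the lifting
property. Both rest on the strong exchange property, which is proved with Tits' representation of
`W` on `W × ℤ/2`: `s_i` acts by `(t, ε) ↦ (s_i t s_i, ε + [t = s_i])`, and the second coordinate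
of `w · (t, 0)` is the parity of the number of occurrences of `t` in the right inversion sequence
of any word for `w`.
-/

namespace CoxeterSystem

open scoped Classical

local prefix:100 "s " => cs.simple
local prefix:100 "π " => cs.wordProd
local prefix:100 "ℓ " => cs.length
local prefix:100 "ris " => cs.rightInvSeq

noncomputable def simpleReflAct (i : B) : Equiv.Perm (W × ZMod 2) :=
  Function.Involutive.toPerm (fun p => (s i * p.1 * s i, p.2 + if p.1 = s i then 1 else 0))
    (by
      rintro ⟨t, ε⟩
      simp [mul_assoc, add_assoc, mul_eq_one_iff_eq_inv, CharTwo.add_self_eq_zero])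

theorem simpleReflAct_apply (i : B) (t : W) (ε : ZMod 2) :
    simpleReflAct cs i (t, ε) = (s i * t * s i, ε + if t = s i then 1 else 0) := rfl

/-- The reflections `(s_j s_i)^k s_j` met along the way are periodic in `k` with period `Cm i j`,
which makes the sum vanish for `n = Cm i j`. -/
theorem simpleReflAct_mul_pow_apply (i j : B) (n : ℕ) (t : W) (ε : ZMod 2) :
    ((simpleReflAct cs i * simpleReflAct cs j) ^ n) (t, ε) =
      ((s i * s j) ^ n * t * ((s i * s j) ^ n)⁻¹,
        ε + ∑ k ∈ Finset.range (2 * n), if t = (s j * s i) ^ k * s j then 1 else 0) := by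
  have hinv : (s i * s j)⁻¹ = s j * s i := by simp
  induction n generalizing t ε with
  | zero => simp
  | succ n ih =>
    rw [pow_succ, Equiv.Perm.mul_apply, Equiv.Perm.mul_apply, simpleReflAct_apply,
      simpleReflAct_apply, ih]
    have hconj (x y : W) : s i * (s j * x * s j) * s i = y ↔ x = s j * s i * y * (s i * s j) := by
      constructor <;> rintro rfl <;> simp [mul_assoc]
    have hshift (k : ℕ) : s j * s i * ((s j * s i) ^ k * s j) * (s i * s j) =
        (s j * s i) ^ (k + 2) * s j := by
      rw [pow_succ, pow_succ']; group
    refine Prod.ext ?_ ?_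
    · simp only [pow_succ, mul_inv_rev, hinv]; group
    · have hfirst : s j * t * s j = s i ↔ t = (s j * s i) ^ (0 + 1) * s j := by
        rw [zero_add, pow_one]
        constructor <;> intro h
        · simp [← h, mul_assoc]
        · simp [h, mul_assoc]
      simp only [hconj, hshift, hfirst, Finset.sum_range_succ', mul_add, mul_one, pow_zero,
        one_mul]
      ring

theorem isLiftable_simpleReflAct : Cm.IsLiftable (simpleReflAct cs) := by
  intro i j
  ext ⟨t, ε⟩ : 1
  rw [simpleReflAct_mul_pow_apply, simple_mul_simple_pow, two_mul, Finset.sum_range_add]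
  simp [pow_add, simple_mul_simple_pow', CharTwo.add_self_eq_zero]

noncomputable def reflRep : W →* Equiv.Perm (W × ZMod 2) :=
  cs.lift ⟨simpleReflAct cs, isLiftable_simpleReflAct cs⟩

theorem reflRep_wordProd_apply (ω : List B) (t : W) (ε : ZMod 2) :
    reflRep cs (π ω) (t, ε) = (π ω * t * (π ω)⁻¹, ε + (ris ω).count t) := by
  induction ω with
  | nil => simp
  | cons i ω ih =>
    have hconj : π ω * t * (π ω)⁻¹ = s i ↔ (π ω)⁻¹ * s i * π ω = t := by
      constructor <;> intro h <;> simp [← h, mul_assoc]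
    rw [wordProd_cons, map_mul, Equiv.Perm.mul_apply, ih, reflRep, lift_apply_simple,
      simpleReflAct_apply, rightInvSeq, List.count_cons, hconj]
    refine Prod.ext (by simp [mul_assoc]) ?_
    simp only [beq_iff_eq]
    push_cast
    ring

noncomputable def reflSign (w t : W) : ZMod 2 := (reflRep cs w (t, 0)).2

theorem reflSign_wordProd (ω : List B) (t : W) : cs.reflSign (π ω) t = (ris ω).count t := by
  simp [reflSign, reflRep_wordProd_apply]

theorem reflRep_apply (w t : W) (ε : ZMod 2) :
    reflRep cs w (t, ε) = (w * t * w⁻¹, ε + cs.reflSign w t) := by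
  obtain ⟨ω, rfl⟩ := cs.wordProd_surjective w
  rw [reflRep_wordProd_apply, reflSign_wordProd]

theorem reflSign_one (t : W) : cs.reflSign 1 t = 0 := by
  simp [reflSign]

theorem reflSign_mul (x y t : W) :
    cs.reflSign (x * y) t = cs.reflSign y t + cs.reflSign x (y * t * y⁻¹) := by
  show (reflRep cs (x * y) (t, 0)).2 = _
  rw [map_mul, Equiv.Perm.mul_apply, reflRep_apply cs y, zero_add, reflRep_apply cs x]

theorem reflSign_simple_self (i : B) : cs.reflSign (s i) (s i) = 1 := by
  simpa using cs.reflSign_wordProd [i] (s i)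

theorem mem_rightInvSeq_of_reflSign_ne_zero {ω : List B} {t : W}
    (h : cs.reflSign (π ω) t ≠ 0) : t ∈ ris ω := by
  rw [reflSign_wordProd] at h
  exact List.count_pos_iff.mp (Nat.pos_of_ne_zero fun h0 => h (by rw [h0, Nat.cast_zero]))

variable {cs}

theorem IsReflection.reflSign_self {t : W} (ht : cs.IsReflection t) : cs.reflSign t t = 1 := by
  obtain ⟨u, i, rfl⟩ := ht
  have hconj : u⁻¹ * (u * s i * u⁻¹) * u⁻¹⁻¹ = s i := by group
  have hcancel := cs.reflSign_mul u u⁻¹ (u * s i * u⁻¹)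
  rw [mul_inv_cancel, reflSign_one, hconj] at hcancel
  rw [reflSign_mul, reflSign_mul, hconj, reflSign_simple_self, cs.inv_simple,
    simple_mul_simple_cancel_right, add_left_comm, ← hcancel, add_zero]

theorem IsReflection.reflSign_mul_self {t : W} (ht : cs.IsReflection t) (w : W) :
    cs.reflSign (w * t) t = cs.reflSign w t + 1 := by
  rw [reflSign_mul, ht.reflSign_self, ht.inv, ht.mul_self, one_mul, add_comm]

/-- If the sign were `0`, it would be `1` for `w * t`, so `t` would be a right inversion of
`w * t` by `isRightInversion_of_mem_rightInvSeq`, i.e. `ℓ w < ℓ (w * t)`. -/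
theorem IsRightInversion.reflSign_eq_one {w t : W} (h : cs.IsRightInversion w t) :
    cs.reflSign w t = 1 := by
  by_contra hne
  have h0 : cs.reflSign w t = 0 := by
    generalize cs.reflSign w t = x at hne
    revert x
    decide
  obtain ⟨α, hα, hwt⟩ := cs.exists_isReduced (w * t)
  have hmem : t ∈ ris α := cs.mem_rightInvSeq_of_reflSign_ne_zero (by
    rw [← hwt, h.1.reflSign_mul_self, h0, zero_add]
    exact one_ne_zero)
  have hlt := (cs.isRightInversion_of_mem_rightInvSeq hα hmem).2
  rw [← hwt, mul_assoc, h.1.mul_self, mul_one] at hlt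
  exact lt_asymm h.2 hlt

/-- The strong exchange property. -/
theorem IsRightInversion.exists_wordProd_eraseIdx {ω : List B} {t : W}
    (h : cs.IsRightInversion (π ω) t) : ∃ j < ω.length, π ω * t = π (ω.eraseIdx j) := by
  have hmem := cs.mem_rightInvSeq_of_reflSign_ne_zero (h.reflSign_eq_one ▸ one_ne_zero)
  obtain ⟨j, hj, rfl⟩ := List.mem_iff_getElem.mp hmem
  refine ⟨j, by simpa using hj, ?_⟩
  rw [← List.getD_eq_getElem _ 1 hj, wordProd_mul_getD_rightInvSeq]

end CoxeterSystem

section Bruhat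

local prefix:100 "s " => cs.simple
local prefix:100 "π " => cs.wordProd
local prefix:100 "ℓ " => cs.length
local prefix:100 "ris " => cs.rightInvSeq
local infix:50 " ≤ᵇ " => bruhatLE cs

theorem bruhatLE_refl_s4 (u : W) : u ≤ᵇ u := Relation.ReflTransGen.refl

theorem bruhatLE_trans {u v w : W} (huv : u ≤ᵇ v) (hvw : v ≤ᵇ w) : u ≤ᵇ w := huv.trans hvw

theorem bruhatLE_mul_of_isReflection {u t : W} (ht : cs.IsReflection t)
    (h : ℓ u < ℓ (u * t)) : u ≤ᵇ u * t :=
  .single ⟨⟨t, ht, rfl⟩, h⟩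

theorem bruhatLE_of_isRightInversion {w t : W} (h : cs.IsRightInversion w t) : w * t ≤ᵇ w := by
  have hwtt : w * t * t = w := by rw [mul_assoc, h.1.mul_self, mul_one]
  have := bruhatLE_mul_of_isReflection cs h.1 (u := w * t) (by rw [hwtt]; exact h.2)
  rwa [hwtt] at this

theorem simple_mul_bruhatLE_of_isLeftDescent {w : W} {i : B} (h : cs.IsLeftDescent w i) :
    s i * w ≤ᵇ w := by
  have hinv : cs.IsRightInversion w (w⁻¹ * s i * w) :=
    ⟨by simpa using (cs.isReflection_simple i).conj w⁻¹,
      by rw [mul_assoc, mul_inv_cancel_left]; exact h⟩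
  simpa [mul_assoc] using bruhatLE_of_isRightInversion cs hinv

theorem bruhatLE_simple_mul_of_not_isLeftDescent {w : W} {i : B} (h : ¬cs.IsLeftDescent w i) :
    w ≤ᵇ s i * w := by
  have hsw : cs.IsLeftDescent (s i * w) i :=
    cs.isLeftDescent_iff_not_isLeftDescent_mul.2 (by rwa [simple_mul_simple_cancel_left])
  simpa using simple_mul_bruhatLE_of_isLeftDescent cs hsw

theorem wordProd_eraseIdx_bruhatLE {ω : List B} (hω : cs.IsReduced ω) {j : ℕ}
    (hj : j < ω.length) : π (ω.eraseIdx j) ≤ᵇ π ω := by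
  have hj' : j < (ris ω).length := by rwa [length_rightInvSeq]
  rw [← wordProd_mul_getD_rightInvSeq, List.getD_eq_getElem _ _ hj']
  exact bruhatLE_of_isRightInversion cs
    (cs.isRightInversion_of_mem_rightInvSeq hω (List.getElem_mem hj'))

/-- The lifting property for a single step `w * t < w`. By strong exchange in a reduced word
`i :: α` of `w`, either `w * t = s i * w` or `s i * (w * t)` is `π α` with a letter deleted. -/
theorem lifting_property_of_isRightInversion {w t : W} {i : B} (h : cs.IsRightInversion w t)
    (hw : cs.IsLeftDescent w i) (hwt : ¬cs.IsLeftDescent (w * t) i) :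
    w * t ≤ᵇ s i * w ∧ s i * (w * t) ≤ᵇ w := by
  obtain ⟨α, hα, hsw⟩ := cs.exists_isReduced (s i * w)
  have hw' : w = π (i :: α) := by rw [wordProd_cons, ← hsw, simple_mul_simple_cancel_left]
  rw [hw'] at h
  obtain ⟨j, hj, hj_eq⟩ := h.exists_wordProd_eraseIdx
  rw [← hw'] at hj_eq
  cases j with
  | zero =>
    rw [List.eraseIdx_cons_zero, ← hsw] at hj_eq
    rw [hj_eq, simple_mul_simple_cancel_left]
    exact ⟨bruhatLE_refl_s4 cs _, bruhatLE_refl_s4 cs _⟩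
  | succ k =>
    have hle : s i * (w * t) ≤ᵇ s i * w := by
      rw [hj_eq, List.eraseIdx_cons_succ, wordProd_cons, simple_mul_simple_cancel_left, hsw]
      exact wordProd_eraseIdx_bruhatLE cs hα (by simpa using hj)
    exact ⟨bruhatLE_trans cs (bruhatLE_simple_mul_of_not_isLeftDescent cs hwt) hle,
      bruhatLE_trans cs hle (simple_mul_bruhatLE_of_isLeftDescent cs hw)⟩

/-- The lifting property (Björner–Brenti, Prop. 2.2.7), together with the ascent case that the
induction along a Bruhat chain needs. -/
theorem lifting_property_s4 {x w : W} (i : B) (hxw : x ≤ᵇ w) :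
    (cs.IsLeftDescent w i → s i * x ≤ᵇ w ∧ (cs.IsLeftDescent x i → s i * x ≤ᵇ s i * w) ∧
      (¬cs.IsLeftDescent x i → x ≤ᵇ s i * w)) ∧
    (¬cs.IsLeftDescent w i → s i * x ≤ᵇ s i * w) := by
  induction hxw with
  | refl =>
    exact ⟨fun hw => ⟨simple_mul_bruhatLE_of_isLeftDescent cs hw, fun _ => bruhatLE_refl_s4 cs _,
      fun hx => absurd hw hx⟩, fun _ => bruhatLE_refl_s4 cs _⟩
  | @tail v _ hxv hvw ih =>
    obtain ⟨⟨t, ht, rfl⟩, hlen⟩ := hvw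
    have hv_le : v ≤ᵇ v * t := bruhatLE_mul_of_isReflection cs ht hlen
    have shift (h : ℓ (s i * v) < ℓ (s i * (v * t))) : s i * v ≤ᵇ s i * (v * t) := by
      rw [← mul_assoc] at h ⊢
      exact bruhatLE_mul_of_isReflection cs ht h
    by_cases hv : cs.IsLeftDescent v i
    · obtain ⟨hA, hB, hC⟩ := ih.1 hv
      have hv1 := cs.isLeftDescent_iff.1 hv
      refine ⟨fun hw => ?_, fun hw => ?_⟩
      · have hs := shift (by have := cs.isLeftDescent_iff.1 hw; omega)
        exact ⟨bruhatLE_trans cs hA hv_le, fun hx => bruhatLE_trans cs (hB hx) hs,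
          fun hx => bruhatLE_trans cs (hC hx) hs⟩
      · exact bruhatLE_trans cs hA
          (bruhatLE_trans cs hv_le (bruhatLE_simple_mul_of_not_isLeftDescent cs hw))
    · have hD := ih.2 hv
      have hv1 := cs.not_isLeftDescent_iff.1 hv
      refine ⟨fun hw => ?_, fun hw => bruhatLE_trans cs hD
        (shift (by have := cs.not_isLeftDescent_iff.1 hw; omega))⟩
      have hvtt : v * t * t = v := by rw [mul_assoc, ht.mul_self, mul_one]
      obtain ⟨hv_sw, hsv_w⟩ := lifting_property_of_isRightInversion cs
        ⟨ht, by rwa [hvtt]⟩ hw (by rwa [hvtt])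
      rw [hvtt] at hv_sw hsv_w
      refine ⟨?_, fun hx => ?_, fun _ => bruhatLE_trans cs hxv hv_sw⟩
      · by_cases hx : cs.IsLeftDescent x i
        · exact bruhatLE_trans cs (simple_mul_bruhatLE_of_isLeftDescent cs hx)
            (bruhatLE_trans cs hxv hv_le)
        · exact bruhatLE_trans cs hD hsv_w
      · exact bruhatLE_trans cs (simple_mul_bruhatLE_of_isLeftDescent cs hx)
          (bruhatLE_trans cs hxv hv_sw)

theorem simple_mul_bruhatLE_of_bruhatLE {x w : W} {i : B} (h : x ≤ᵇ w)
    (hw : cs.IsLeftDescent w i) : s i * x ≤ᵇ w :=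
  ((lifting_property_s4 cs i h).1 hw).1

theorem simple_mul_bruhatLE_simple_mul_of_isLeftDescent {x w : W} {i : B} (h : x ≤ᵇ w)
    (hw : cs.IsLeftDescent w i) (hx : cs.IsLeftDescent x i) : s i * x ≤ᵇ s i * w :=
  ((lifting_property_s4 cs i h).1 hw).2.1 hx

theorem bruhatLE_simple_mul_of_bruhatLE {x w : W} {i : B} (h : x ≤ᵇ w)
    (hw : cs.IsLeftDescent w i) (hx : ¬cs.IsLeftDescent x i) : x ≤ᵇ s i * w :=
  ((lifting_property_s4 cs i h).1 hw).2.2 hx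

theorem simple_mul_bruhatLE_simple_mul_of_not_isLeftDescent {x w : W} {i : B} (h : x ≤ᵇ w)
    (hw : ¬cs.IsLeftDescent w i) : s i * x ≤ᵇ s i * w :=
  (lifting_property_s4 cs i h).2 hw

theorem mem_parabolic_iff {J : Set B} {u : W} :
    u ∈ parabolic cs J ↔ ∃ ω : List B, (∀ b ∈ ω, b ∈ J) ∧ π ω = u := by
  constructor
  · intro h
    induction h using Subgroup.closure_induction with
    | mem x hx =>
      obtain ⟨j, hj, rfl⟩ := hx
      exact ⟨[j], by simpa using hj, cs.wordProd_singleton j⟩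
    | one => exact ⟨[], by simp, cs.wordProd_nil⟩
    | mul x y _ _ ihx ihy =>
      obtain ⟨ωx, hωx, rfl⟩ := ihx
      obtain ⟨ωy, hωy, rfl⟩ := ihy
      refine ⟨ωx ++ ωy, fun b hb => ?_, cs.wordProd_append ωx ωy⟩
      exact (List.mem_append.1 hb).elim (hωx b) (hωy b)
    | inv x _ ih =>
      obtain ⟨ω, hω, rfl⟩ := ih
      exact ⟨ω.reverse, fun b hb => hω b (List.mem_reverse.1 hb), cs.wordProd_reverse ω⟩
  · rintro ⟨ω, hω, rfl⟩
    refine list_prod_mem fun x hx => ?_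
    obtain ⟨b, hb, rfl⟩ := List.mem_map.1 hx
    exact Subgroup.subset_closure ⟨b, hω b hb, rfl⟩

theorem mul_mem_parabolic_of_isRightInversion {J : Set B} {z t : W} (hz : z ∈ parabolic cs J)
    (h : cs.IsRightInversion z t) : z * t ∈ parabolic cs J := by
  obtain ⟨ω, hω, rfl⟩ := (mem_parabolic_iff cs).1 hz
  obtain ⟨j, -, hj⟩ := h.exists_wordProd_eraseIdx
  exact (mem_parabolic_iff cs).2
    ⟨ω.eraseIdx j, fun b hb => hω b ((List.eraseIdx_sublist ω j).subset hb), hj.symm⟩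

theorem mem_parabolic_of_bruhatLE {J : Set B} {u z : W} (h : u ≤ᵇ z)
    (hz : z ∈ parabolic cs J) : u ∈ parabolic cs J := by
  induction h using Relation.ReflTransGen.head_induction_on with
  | refl => exact hz
  | @head a _ hab _ hb =>
    obtain ⟨⟨t, ht, rfl⟩, hlen⟩ := hab
    have hvtt : a * t * t = a := by rw [mul_assoc, ht.mul_self, mul_one]
    simpa [hvtt] using mul_mem_parabolic_of_isRightInversion cs hb ⟨ht, by rwa [hvtt]⟩

theorem simple_mem_parabolic_of_isLeftDescent {J : Set B} {u : W} {i : B}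
    (hu : u ∈ parabolic cs J) (h : cs.IsLeftDescent u i) : s i ∈ parabolic cs J := by
  have hsu := mem_parabolic_of_bruhatLE cs (simple_mul_bruhatLE_of_isLeftDescent cs h) hu
  simpa using mul_mem hsu (inv_mem hu)

theorem exists_parabolic_max_of_isLeftDescent {J : Set B} {w z : W} {i : B}
    (hw : cs.IsLeftDescent w i)
    (hz : ∀ u, u ∈ parabolic cs J ∧ u ≤ᵇ s i * w ↔ u ≤ᵇ z) :
    ∃ z', ∀ u, u ∈ parabolic cs J ∧ u ≤ᵇ w ↔ u ≤ᵇ z' := by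
  obtain ⟨hzJ, hzw⟩ := (hz z).2 (bruhatLE_refl_s4 cs z)
  have hsw : s i * w ≤ᵇ w := simple_mul_bruhatLE_of_isLeftDescent cs hw
  have hasc {u} (hu : u ∈ parabolic cs J) (huw : u ≤ᵇ w) (hd : ¬cs.IsLeftDescent u i) :
      u ≤ᵇ z :=
    (hz u).1 ⟨hu, bruhatLE_simple_mul_of_bruhatLE cs huw hw hd⟩
  have hdesc {u} (hu : u ∈ parabolic cs J) (huw : u ≤ᵇ w) (hd : cs.IsLeftDescent u i) :
      s i * u ≤ᵇ z :=
    (hz _).1 ⟨mem_parabolic_of_bruhatLE cs (simple_mul_bruhatLE_of_isLeftDescent cs hd) hu,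
      simple_mul_bruhatLE_simple_mul_of_isLeftDescent cs huw hw hd⟩
  by_cases hsz : s i ∈ parabolic cs J ∧ ¬cs.IsLeftDescent z i
  · have hszw : s i * z ≤ᵇ w := by
      simpa using simple_mul_bruhatLE_simple_mul_of_not_isLeftDescent cs hzw
        (cs.isLeftDescent_iff_not_isLeftDescent_mul.1 hw)
    refine ⟨s i * z, fun u => ⟨fun ⟨hu, huw⟩ => ?_, fun h => ?_⟩⟩
    · by_cases hd : cs.IsLeftDescent u i
      · simpa using simple_mul_bruhatLE_simple_mul_of_not_isLeftDescent cs (hdesc hu huw hd) hsz.2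
      · exact bruhatLE_trans cs (hasc hu huw hd) (bruhatLE_simple_mul_of_not_isLeftDescent cs hsz.2)
    · exact ⟨mem_parabolic_of_bruhatLE cs h (mul_mem hsz.1 hzJ), bruhatLE_trans cs h hszw⟩
  · refine ⟨z, fun u => ⟨fun ⟨hu, huw⟩ => ?_, fun h => ?_⟩⟩
    · by_cases hd : cs.IsLeftDescent u i
      · have hzd : cs.IsLeftDescent z i :=
          not_not.1 fun h => hsz ⟨simple_mem_parabolic_of_isLeftDescent cs hu hd, h⟩
        simpa using simple_mul_bruhatLE_of_bruhatLE cs (hdesc hu huw hd) hzd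
      · exact hasc hu huw hd
    · obtain ⟨hu, husw⟩ := (hz u).2 h
      exact ⟨hu, bruhatLE_trans cs husw hsw⟩

theorem exists_parabolic_max (J : Set B) (w : W) :
    ∃ z, ∀ u, u ∈ parabolic cs J ∧ u ≤ᵇ w ↔ u ≤ᵇ z := by
  induction hn : ℓ w generalizing w with
  | zero =>
    obtain rfl := cs.length_eq_zero_iff.1 hn
    exact ⟨1, fun u => ⟨And.right, fun h => ⟨mem_parabolic_of_bruhatLE cs h (one_mem _), h⟩⟩⟩
  | succ n ih =>
    have hw1 : w ≠ 1 := by rintro rfl; simp at hn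
    obtain ⟨i, hi⟩ := cs.exists_leftDescent_of_ne_one hw1
    obtain ⟨z, hz⟩ := ih (s i * w) (by have := cs.isLeftDescent_iff.1 hi; omega)
    exact exists_parabolic_max_of_isLeftDescent cs hi hz

end Bruhat

/-- `W_J ∩ [e,w]` has a unique maximal element `w₀(J)`, and equals the lower Bruhat
interval `[e, w₀(J)]`. -/
theorem parabolic_inter_interval (J : Set B) (w : W) :
    ∃ z : W, z ∈ parabolic cs J ∧ bruhatLE cs z w ∧
      ∀ u : W, (u ∈ parabolic cs J ∧ bruhatLE cs u w) ↔ bruhatLE cs u z := by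
  obtain ⟨z, hz⟩ := exists_parabolic_max cs J w
  obtain ⟨hzJ, hzw⟩ := (hz z).2 (bruhatLE_refl_s4 cs z)
  exact ⟨z, hzJ, hzw, hz⟩
end

section
/- Let (W,S) be a Coxeter system and u, w ∈ W such that u is a prefix of w (i.e., ℓ(u) + ℓ(u⁻¹w) = ℓ(w)). If u ∈ W_J for some J ⊆ S, then u is a prefix of the left parabolic component _J w, and the component ^J w is a suffix of u⁻¹w (i.e., ℓ(u⁻¹w) = ℓ(u⁻¹w · (^J w)⁻¹) + ℓ(^J w)). -/
/-!
Everything rests on the additivity `ℓ(a c) = ℓ(a) + ℓ(c)` for `a ∈ W_J` and `c ∈ ^J W`: writing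
`u⁻¹ w = (u⁻¹ b) c` with `u⁻¹ b ∈ W_J` gives `ℓ(u⁻¹ w) = ℓ(u⁻¹ b) + ℓ(c)`, from which both claims
are arithmetic.

Additivity is first proved for an element `c₀` of minimal length in `W_J c`, by induction along
`a ∈ W_J` with the exchange condition: a letter deleted from the `c₀`-part of a reduced word would
give a shorter element of `W_J c₀`. Writing `c = y c₀` with `y ∈ W_J`, a left descent of `y` in `J`
would then be one of `c`, so `y = 1`.

The exchange condition comes from Humphreys' representation of `W` on `W × ℤ/2`, in which `s`
sends `(t, e)` to `(s t s, e + [t = s])`: the sign picked up by `t` under `(wordProd ω)⁻¹` is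
the parity of the number of occurrences of `t` in the left inversion sequence of `ω`.
-/

open CoxeterSystem

variable {B W : Type*} [Group W] {Cm : CoxeterMatrix B} (cs : CoxeterSystem Cm W)

namespace CoxeterSystem

section ReflectionRepresentation

open scoped Classical

theorem simple_mul_mul_simple_eq_iff (i : B) (t u : W) :
    cs.simple i * t * cs.simple i = u ↔ t = cs.simple i * u * cs.simple i := by
  constructor <;> rintro rfl <;> simp [mul_assoc]

noncomputable def reflectionPerm (i : B) : Equiv.Perm (W × ZMod 2) :=
  Function.Involutive.toPerm
    (fun x => (cs.simple i * x.1 * cs.simple i, x.2 + if x.1 = cs.simple i then 1 else 0)) <| by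
    rintro ⟨t, e⟩
    refine Prod.ext ?_ ?_
    · simp [mul_assoc]
    · simp only [simple_mul_mul_simple_eq_iff, cs.simple_mul_simple_self, one_mul]
      rw [add_assoc, CharTwo.add_self_eq_zero, add_zero]

theorem reflectionPerm_apply (i : B) (t : W) (e : ZMod 2) :
    cs.reflectionPerm i (t, e) =
      (cs.simple i * t * cs.simple i, e + if t = cs.simple i then 1 else 0) := rfl

theorem reflectionPerm_mul_apply (i j : B) (t : W) (e : ZMod 2) :
    (cs.reflectionPerm i * cs.reflectionPerm j) (t, e) =
      (cs.simple i * cs.simple j * t * (cs.simple i * cs.simple j)⁻¹,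
        e + ∑ k ∈ Finset.range 2,
          if t = cs.simple j * (cs.simple i * cs.simple j) ^ k then 1 else 0) := by
  rw [Equiv.Perm.mul_apply, reflectionPerm_apply, reflectionPerm_apply,
    simple_mul_mul_simple_eq_iff]
  simp only [Finset.sum_range_succ, Finset.sum_range_zero, pow_zero, pow_one, mul_one, zero_add,
    mul_inv_rev, cs.inv_simple, mul_assoc, add_assoc]

theorem reflectionPerm_mul_pow_apply (i j : B) (n : ℕ) (t : W) (e : ZMod 2) :
    ((cs.reflectionPerm i * cs.reflectionPerm j) ^ n) (t, e) =
      ((cs.simple i * cs.simple j) ^ n * t * ((cs.simple i * cs.simple j) ^ n)⁻¹,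
        e + ∑ k ∈ Finset.range (2 * n),
          if t = cs.simple j * (cs.simple i * cs.simple j) ^ k then 1 else 0) := by
  set p := cs.simple i * cs.simple j with hp
  have hinv : p⁻¹ * cs.simple j = cs.simple j * p := by simp [p, mul_assoc]
  clear_value p
  have hshift (t : W) (k : ℕ) :
      p * t * p⁻¹ = cs.simple j * p ^ k ↔ t = cs.simple j * p ^ (2 + k) := by
    have hconj : p⁻¹ * (cs.simple j * p ^ k * p) = cs.simple j * p ^ (2 + k) := by
      rw [← mul_assoc, ← mul_assoc, hinv, mul_assoc, mul_assoc, ← pow_succ, ← pow_succ',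
        add_comm 2]
    rw [← hconj, eq_inv_mul_iff_mul_eq, mul_inv_eq_iff_eq_mul]
  induction n generalizing t e with
  | zero => simp
  | succ n ih =>
    rw [pow_succ, Equiv.Perm.mul_apply, reflectionPerm_mul_apply, ← hp, ih,
      show 2 * (n + 1) = 2 + 2 * n by ring, Finset.sum_range_add]
    simp only [hshift]
    simp only [pow_succ, mul_inv_rev, mul_assoc, add_assoc]

theorem isLiftable_reflectionPerm : Cm.IsLiftable cs.reflectionPerm := by
  intro i j
  have hpow : (cs.simple i * cs.simple j) ^ Cm i j = 1 := cs.simple_mul_simple_pow i j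
  ext ⟨t, e⟩ : 1
  -- `k ↦ s j * (s i * s j) ^ k` has period `Cm i j`, so each term of the sum occurs twice.
  rw [reflectionPerm_mul_pow_apply, hpow, two_mul, Finset.sum_range_add]
  simp only [pow_add, hpow, one_mul, mul_one, inv_one, CharTwo.add_self_eq_zero, add_zero,
    Equiv.Perm.one_apply]

noncomputable def reflectionRep : W →* Equiv.Perm (W × ZMod 2) :=
  cs.lift ⟨cs.reflectionPerm, cs.isLiftable_reflectionPerm⟩

theorem reflectionRep_wordProd_inv_apply (ω : List B) (t : W) (e : ZMod 2) :
    cs.reflectionRep (cs.wordProd ω)⁻¹ (t, e) =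
      ((cs.wordProd ω)⁻¹ * t * cs.wordProd ω, e + ((cs.leftInvSeq ω).count t : ZMod 2)) := by
  induction ω generalizing t e with
  | nil => simp
  | cons i ω ih =>
    have hcount : (cs.leftInvSeq ω).count (cs.simple i * t * cs.simple i) =
        ((cs.leftInvSeq ω).map (MulAut.conj (cs.simple i))).count t := by
      conv_rhs => rw [show t = MulAut.conj (cs.simple i) (cs.simple i * t * cs.simple i) by
        simp [mul_assoc]]
      exact ((cs.leftInvSeq ω).count_map_of_injective _ (MulAut.conj _).injective _).symm
    rw [cs.wordProd_cons, mul_inv_rev, cs.inv_simple, map_mul, Equiv.Perm.mul_apply,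
      reflectionRep, cs.lift_apply_simple, reflectionPerm_apply, ← reflectionRep, ih, hcount,
      leftInvSeq, List.count_cons]
    simp [mul_assoc, add_assoc, add_comm, eq_comm (a := t)]

theorem reflectionRep_apply (w t : W) (e : ZMod 2) :
    cs.reflectionRep w (t, e) = (w * t * w⁻¹, e + (cs.reflectionRep w (t, 0)).2) := by
  obtain ⟨ω, hω⟩ := cs.wordProd_surjective w⁻¹
  obtain rfl : w = (cs.wordProd ω)⁻¹ := by rw [hω, inv_inv]
  rw [reflectionRep_wordProd_inv_apply, reflectionRep_wordProd_inv_apply, inv_inv, zero_add]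

theorem reflectionRep_apply_add (w t : W) (e f : ZMod 2) :
    cs.reflectionRep w (t, e + f) =
      ((cs.reflectionRep w (t, e)).1, (cs.reflectionRep w (t, e)).2 + f) := by
  rw [reflectionRep_apply, reflectionRep_apply (e := e), add_right_comm]

theorem reflectionRep_self_apply {t : W} (ht : cs.IsReflection t) :
    cs.reflectionRep t (t, 0) = (t, 1) := by
  obtain ⟨v, i, rfl⟩ := ht
  set c := (cs.reflectionRep v⁻¹ (v * cs.simple i * v⁻¹, 0)).2
  have hv_inv : cs.reflectionRep v⁻¹ (v * cs.simple i * v⁻¹, 0) = (cs.simple i, c) := by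
    rw [reflectionRep_apply]
    simp [c, mul_assoc]
  have hv : cs.reflectionRep v (cs.simple i, c) = (v * cs.simple i * v⁻¹, 0) := by
    rw [← hv_inv, ← Equiv.Perm.mul_apply, ← map_mul, mul_inv_cancel, map_one, Equiv.Perm.one_apply]
  have hs : cs.reflectionRep (cs.simple i) (cs.simple i, c) = (cs.simple i, c + 1) := by
    rw [reflectionRep, cs.lift_apply_simple, reflectionPerm_apply, if_pos rfl]
    simp
  rw [map_mul, map_mul, Equiv.Perm.mul_apply, Equiv.Perm.mul_apply, hv_inv, hs,
    reflectionRep_apply_add, hv]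
  simp

theorem mem_leftInvSeq_of_isLeftInversion {ω : List B} {t : W}
    (ht : cs.IsLeftInversion (cs.wordProd ω) t) : t ∈ cs.leftInvSeq ω := by
  obtain ⟨hrefl, hlt⟩ := ht
  by_contra hmem
  obtain ⟨ω', hω'red, hω'⟩ := cs.exists_isReduced (t * cs.wordProd ω)
  have hcount : ((cs.leftInvSeq ω').count t : ZMod 2) = 1 := by
    -- `t` flips its own sign, which `(wordProd ω)⁻¹` leaves unchanged since `t ∉ leftInvSeq ω`.
    have h := congrArg Prod.snd (cs.reflectionRep_wordProd_inv_apply ω' t 0)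
    rw [← hω', mul_inv_rev, hrefl.inv, map_mul, Equiv.Perm.mul_apply,
      reflectionRep_self_apply _ hrefl, show (1 : ZMod 2) = 0 + 1 from (zero_add 1).symm,
      reflectionRep_apply_add, reflectionRep_wordProd_inv_apply, List.count_eq_zero.mpr hmem] at h
    simpa using h.symm
  have hmem' : t ∈ cs.leftInvSeq ω' := by
    by_contra h
    simp [List.count_eq_zero.mpr h] at hcount
  have hinv := (cs.isLeftInversion_of_mem_leftInvSeq hω'red hmem').2
  rw [← hω', ← mul_assoc, hrefl.mul_self, one_mul] at hinv
  exact lt_asymm hlt hinv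

theorem exists_eraseIdx_of_isLeftDescent {ω : List B} {i : B}
    (h : cs.IsLeftDescent (cs.wordProd ω) i) :
    ∃ j < ω.length, cs.simple i * cs.wordProd ω = cs.wordProd (ω.eraseIdx j) := by
  have hmem := cs.mem_leftInvSeq_of_isLeftInversion ⟨cs.isReflection_simple i, h⟩
  obtain ⟨j, hj, hget⟩ := List.mem_iff_getElem.mp hmem
  refine ⟨j, by simpa using hj, ?_⟩
  rw [← cs.getD_leftInvSeq_mul_wordProd, List.getD_eq_getElem _ _ hj, hget]

end ReflectionRepresentation

theorem isLeftDescent_or_exists_of_isLeftDescent_mul {v w : W} {i : B}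
    (h : cs.IsLeftDescent (v * w) i) :
    cs.IsLeftDescent v i ∨ ∃ w', cs.length w' < cs.length w ∧ cs.simple i * (v * w) = v * w' := by
  obtain ⟨ρ, hρ, rfl⟩ := cs.exists_isReduced v
  obtain ⟨σ, hσ, rfl⟩ := cs.exists_isReduced w
  rw [← cs.wordProd_append] at h
  obtain ⟨j, hj, hexch⟩ := cs.exists_eraseIdx_of_isLeftDescent h
  rw [List.length_append] at hj
  rw [cs.wordProd_append] at hexch
  by_cases hjρ : j < ρ.length
  · left
    rw [List.eraseIdx_append_of_lt_length hjρ, cs.wordProd_append, ← mul_assoc,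
      mul_left_inj] at hexch
    have := cs.length_wordProd_le (ρ.eraseIdx j)
    rw [List.length_eraseIdx_of_lt hjρ, ← hexch] at this
    have := hρ.eq
    unfold IsLeftDescent
    omega
  · right
    rw [List.eraseIdx_append_of_length_le (not_lt.mp hjρ), cs.wordProd_append] at hexch
    refine ⟨_, ?_, hexch⟩
    have := cs.length_wordProd_le (σ.eraseIdx (j - ρ.length))
    rw [List.length_eraseIdx_of_lt (by omega)] at this
    have := hσ.eq
    omega

theorem exists_isReduced_sublist_simple_mul {ω : List B} (hω : cs.IsReduced ω) (i : B) :
    ∃ ω' : List B, cs.IsReduced ω' ∧ ω'.Sublist (i :: ω) ∧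
      cs.wordProd ω' = cs.simple i * cs.wordProd ω := by
  have hlen := cs.length_simple_mul (cs.wordProd ω) i
  by_cases hdesc : cs.IsLeftDescent (cs.wordProd ω) i
  · obtain ⟨j, hj, hexch⟩ := cs.exists_eraseIdx_of_isLeftDescent hdesc
    refine ⟨ω.eraseIdx j, ?_, (ω.eraseIdx_sublist j).cons i, hexch.symm⟩
    unfold IsReduced IsLeftDescent at *
    rw [← hexch, List.length_eraseIdx_of_lt hj]
    omega
  · refine ⟨i :: ω, ?_, List.Sublist.refl _, cs.wordProd_cons i ω⟩
    unfold IsReduced IsLeftDescent at *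
    rw [cs.wordProd_cons, List.length_cons]
    omega

theorem exists_isReduced_of_mem_parabolic {J : Set B} {a : W} (ha : a ∈ parabolic cs J) :
    ∃ ω : List B, (∀ x ∈ ω, x ∈ J) ∧ cs.IsReduced ω ∧ cs.wordProd ω = a := by
  have step (i : B) (hi : i ∈ J) (ω : List B) (hωJ : ∀ x ∈ ω, x ∈ J) (hω : cs.IsReduced ω) :
      ∃ ω' : List B, (∀ x ∈ ω', x ∈ J) ∧ cs.IsReduced ω' ∧
        cs.wordProd ω' = cs.simple i * cs.wordProd ω := by
    obtain ⟨ω', hω', hsub, hprod⟩ := cs.exists_isReduced_sublist_simple_mul hω i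
    refine ⟨ω', fun x hx => ?_, hω', hprod⟩
    rcases List.mem_cons.mp (hsub.subset hx) with rfl | hx
    exacts [hi, hωJ x hx]
  induction ha using Subgroup.closure_induction_left with
  | one => exact ⟨[], by simp, by simp [IsReduced], rfl⟩
  | mul_left x hx y _ ih =>
    obtain ⟨i, hi, rfl⟩ := hx
    obtain ⟨ω, hωJ, hω, rfl⟩ := ih
    exact step i hi ω hωJ hω
  | inv_mul_cancel x hx y _ ih =>
    obtain ⟨i, hi, rfl⟩ := hx
    obtain ⟨ω, hωJ, hω, rfl⟩ := ih
    rw [cs.inv_simple]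
    exact step i hi ω hωJ hω

theorem eq_one_of_mem_parabolic_of_isMinimalLeft {J : Set B} {a : W} (ha : a ∈ parabolic cs J)
    (hmin : isMinimalLeft cs J a) : a = 1 := by
  obtain ⟨ω, hωJ, hω, rfl⟩ := cs.exists_isReduced_of_mem_parabolic ha
  cases ω with
  | nil => rfl
  | cons i ω =>
    refine absurd ?_ (hmin i (hωJ i List.mem_cons_self))
    have := cs.length_wordProd_le ω
    unfold IsReduced at hω
    rw [IsLeftDescent, cs.wordProd_cons, cs.simple_mul_simple_cancel_left, ← cs.wordProd_cons, hω,
      List.length_cons]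
    omega

theorem length_mul_of_forall_length_le {J : Set B} {a c : W}
    (hc : ∀ x ∈ parabolic cs J, cs.length c ≤ cs.length (x * c)) (ha : a ∈ parabolic cs J) :
    cs.length (a * c) = cs.length a + cs.length c := by
  have step (i : B) (hi : i ∈ J) (y : W) (hy : y ∈ parabolic cs J)
      (ih : cs.length (y * c) = cs.length y + cs.length c) :
      cs.length (cs.simple i * y * c) = cs.length (cs.simple i * y) + cs.length c := by
    have hsyc := cs.length_simple_mul (y * c) i
    have hsy := cs.length_simple_mul y i
    have hle := cs.length_mul_le (cs.simple i * y) c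
    rw [mul_assoc] at hle ⊢
    by_cases hdesc : cs.IsLeftDescent (y * c) i
    · rcases cs.isLeftDescent_or_exists_of_isLeftDescent_mul hdesc with hdesc_y | ⟨w', hw', hexch⟩
      · unfold IsLeftDescent at hdesc hdesc_y
        omega
      · have hconj : y⁻¹ * cs.simple i * y ∈ parabolic cs J :=
          mul_mem (mul_mem (inv_mem hy) (Subgroup.subset_closure ⟨i, hi, rfl⟩)) hy
        have := hc _ hconj
        rw [mul_assoc, mul_assoc, hexch, inv_mul_cancel_left] at this
        omega
    · unfold IsLeftDescent at hdesc
      omega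
  induction ha using Subgroup.closure_induction_left with
  | one => simp
  | mul_left x hx y hy ih =>
    obtain ⟨i, hi, rfl⟩ := hx
    exact step i hi y hy ih
  | inv_mul_cancel x hx y hy ih =>
    obtain ⟨i, hi, rfl⟩ := hx
    rw [cs.inv_simple]
    exact step i hi y hy ih

theorem length_le_length_mul_of_isMinimalLeft {J : Set B} {c x : W} (hc : isMinimalLeft cs J c)
    (hx : x ∈ parabolic cs J) : cs.length c ≤ cs.length (x * c) := by
  obtain ⟨y, hy, hmin⟩ := (InvImage.wf (fun z => cs.length (z * c)) wellFounded_lt).has_min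
    (parabolic cs J : Set W) ⟨1, one_mem _⟩
  simp only [SetLike.mem_coe, InvImage, not_lt] at hmin
  -- `y * c` has minimal length in `W_J c`.
  have hadd : ∀ a ∈ parabolic cs J, cs.length (a * (y * c)) = cs.length a + cs.length (y * c) :=
    fun a ha => cs.length_mul_of_forall_length_le
      (fun z hz => by simpa [mul_assoc] using hmin (z * y) (mul_mem hz hy)) ha
  have hy_inv : y⁻¹ = 1 := by
    refine cs.eq_one_of_mem_parabolic_of_isMinimalLeft (inv_mem hy) fun i hi hdesc => hc i hi ?_
    have h1 := hadd _ (mul_mem (Subgroup.subset_closure ⟨i, hi, rfl⟩) (inv_mem hy))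
    have h2 := hadd _ (inv_mem hy)
    simp only [mul_assoc, inv_mul_cancel_left] at h1 h2
    unfold IsLeftDescent at hdesc ⊢
    omega
  rw [inv_eq_one] at hy_inv
  subst hy_inv
  simpa using hmin x hx

theorem length_mul_of_isMinimalLeft {J : Set B} {a c : W} (ha : a ∈ parabolic cs J)
    (hc : isMinimalLeft cs J c) : cs.length (a * c) = cs.length a + cs.length c :=
  cs.length_mul_of_forall_length_le (fun _ hx => cs.length_le_length_mul_of_isMinimalLeft hc hx) ha

end CoxeterSystem

/-- If `u` is a prefix of `w` and `u ∈ W_J`, then `u` is a prefix of `_J w` and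
`^J w` is a suffix of `u⁻¹ w`. Here `w = b · c` with `b = _J w ∈ W_J`,
`c = ^J w ∈ ^J W` and additive lengths. -/
theorem prefix_of_parabolic_component (J : Set B) (u w b c : W)
    (hprefix : cs.length u + cs.length (u⁻¹ * w) = cs.length w)
    (hu : u ∈ parabolic cs J)
    (hw : w = b * c) (hb : b ∈ parabolic cs J) (hc : isMinimalLeft cs J c)
    (hl : cs.length w = cs.length b + cs.length c) :
    cs.length u + cs.length (u⁻¹ * b) = cs.length b ∧
    cs.length ((u⁻¹ * w) * c⁻¹) + cs.length c = cs.length (u⁻¹ * w) := by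
  have hsplit : cs.length (u⁻¹ * w) = cs.length (u⁻¹ * b) + cs.length c := by
    rw [hw, ← mul_assoc]
    exact cs.length_mul_of_isMinimalLeft (mul_mem (inv_mem hu) hb) hc
  have hquot : u⁻¹ * w * c⁻¹ = u⁻¹ * b := by rw [hw, ← mul_assoc, mul_inv_cancel_right]
  exact ⟨by omega, by rw [hquot, hsplit]⟩
end

section
/- Let (W,S) be a Coxeter system, w ∈ W, and suppose w has two right descents s, t ∈ S. Then w has a reduced expression ending in the alternating word s-t-s-⋯ of length m_{s,t} (m_{s,t} letters alternating, ending appropriately). -/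
/-!
By induction on `k ≤ m_{s,t}`, `w` has a reduced word ending in the alternating word of length `k`
ending in `t`, and one ending in `s`. For the step, apply the strong exchange condition to the
right inversion `t` of `w` and a reduced word `ω ⬝ (⋯ t s)` with a suffix of length `k` ending in
`s`. The letter to delete cannot lie in the suffix, as there it would give `(s t)^j = 1` with
`0 < j ≤ k < m_{s,t}`; deleting it from `ω` and appending `t` gives a reduced word of the required
shape for `k + 1`.

The strong exchange condition is proved with the parity of the number of occurrences of a
reflection in the right inversion sequence of a word: it depends only on the product, because the
corresponding action of the simple reflections on `W × ℤ/2` satisfies the Coxeter relations. That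
`s t` has order exactly `m_{s,t}` comes from the geometric representation, where `s t` acts on the
plane of the simple roots of `s` and `t` as a rotation by `2π / m_{s,t}`.
-/

open CoxeterSystem

variable {B W : Type*} [Group W] {Cm : CoxeterMatrix B} (cs : CoxeterSystem Cm W)

namespace CoxeterMatrix

open Finsupp Real

variable (Cm)

noncomputable def geomForm (a : B) : (B →₀ ℝ) →ₗ[ℝ] ℝ :=
  linearCombination ℝ fun b => -cos (π / Cm a b)

noncomputable def geomReflection (a : B) : Module.End ℝ (B →₀ ℝ) :=
  LinearMap.id - (2 • Cm.geomForm a).smulRight (single a 1)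

theorem geomForm_single (a b : B) : Cm.geomForm a (single b 1) = -cos (π / Cm a b) := by
  simp [geomForm]

theorem geomForm_single_self (a : B) : Cm.geomForm a (single a 1) = 1 := by
  simp [geomForm_single]

theorem geomReflection_apply (a : B) (v : B →₀ ℝ) :
    Cm.geomReflection a v = v - (2 * Cm.geomForm a v) • single a 1 := by
  simp [geomReflection]

theorem geomReflection_single_self (a : B) :
    Cm.geomReflection a (single a 1) = -single a 1 := by
  rw [geomReflection_apply, geomForm_single_self]
  module

theorem geomReflection_single (a b : B) :
    Cm.geomReflection a (single b 1) = single b 1 + (2 * cos (π / Cm a b)) • single a 1 := by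
  rw [geomReflection_apply, geomForm_single]
  module

theorem geomReflection_of_geomForm_eq_zero {a : B} {v : B →₀ ℝ} (hv : Cm.geomForm a v = 0) :
    Cm.geomReflection a v = v := by
  simp [geomReflection_apply, hv]

theorem geomReflection_mul_self (a : B) : Cm.geomReflection a * Cm.geomReflection a = 1 := by
  refine LinearMap.ext fun v => ?_
  rw [Module.End.mul_apply, geomReflection_apply Cm a v, map_sub, map_smul,
    geomReflection_single_self, geomReflection_apply, Module.End.one_apply]
  module

section Dihedral

variable (a b : B)

/-- Coordinates on the plane of the roots of `a` and `b` in which the rotation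
`geomReflection a * geomReflection b` acts as `x ↦ x + 2π / Cm a b`. -/
noncomputable def dihedralVec (x : ℝ) : B →₀ ℝ :=
  sin x • single a 1 + sin (x - π / Cm a b) • single b 1

private theorem sin_add_eq_two_cos_mul_sin_sub (x θ : ℝ) :
    sin (x + θ) = 2 * cos θ * sin x - sin (x - θ) := by
  rw [sin_add, sin_sub]
  ring

theorem geomReflection_mul_geomReflection_dihedralVec (x : ℝ) :
    (Cm.geomReflection a * Cm.geomReflection b) (Cm.dihedralVec a b x) =
      Cm.dihedralVec a b (x + 2 * (π / Cm a b)) := by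
  have hb : Cm.geomReflection b (Cm.dihedralVec a b x) =
      sin x • single a 1 + sin (x + π / Cm a b) • single b 1 := by
    rw [dihedralVec, map_add, map_smul, map_smul, geomReflection_single_self,
      geomReflection_single, Cm.symmetric b a, sin_add_eq_two_cos_mul_sin_sub]
    module
  have h2 := sin_add_eq_two_cos_mul_sin_sub (x + π / Cm a b) (π / Cm a b)
  rw [add_sub_cancel_right, add_assoc, ← two_mul] at h2
  rw [Module.End.mul_apply, hb, map_add, map_smul, map_smul, geomReflection_single_self,
    geomReflection_single, dihedralVec, h2,
    show x + 2 * (π / Cm a b) - π / Cm a b = x + π / Cm a b by ring]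
  module

theorem geomReflection_mul_pow_dihedralVec (n : ℕ) (x : ℝ) :
    ((Cm.geomReflection a * Cm.geomReflection b) ^ n) (Cm.dihedralVec a b x) =
      Cm.dihedralVec a b (x + 2 * n * (π / Cm a b)) := by
  induction n generalizing x with
  | zero => simp
  | succ n ih =>
    rw [pow_succ, Module.End.mul_apply, geomReflection_mul_geomReflection_dihedralVec, ih]
    push_cast
    ring_nf

theorem dihedralVec_apply_left {a b : B} (hab : a ≠ b) (x : ℝ) :
    Cm.dihedralVec a b x a = sin x := by
  simp [dihedralVec, hab.symm]

theorem dihedralVec_add_two_pi (x : ℝ) : Cm.dihedralVec a b (x + 2 * π) = Cm.dihedralVec a b x := by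
  simp only [dihedralVec, sin_add_two_pi, add_sub_right_comm]

private theorem sin_mul_pi_div_pos {n m : ℕ} (h0 : 0 < n) (hn : n < m) : 0 < sin (n * (π / m)) := by
  have hm : (0 : ℝ) < m := by exact_mod_cast h0.trans hn
  apply sin_pos_of_pos_of_lt_pi (by positivity)
  rw [mul_div_assoc', div_lt_iff₀ hm, mul_comm]
  exact mul_lt_mul_of_pos_left (by exact_mod_cast hn) pi_pos

/-- The common kernel is a complement of the plane of the two roots because their Gram determinant
is `1 - cos² (π / Cm a b) = sin² (π / Cm a b)`. -/
theorem eq_one_of_fixes_plane_and_ker {f : Module.End ℝ (B →₀ ℝ)} (hsin : sin (π / Cm a b) ≠ 0)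
    (ha : f (single a 1) = single a 1) (hb : f (single b 1) = single b 1)
    (hker : ∀ v, Cm.geomForm a v = 0 → Cm.geomForm b v = 0 → f v = v) : f = 1 := by
  refine LinearMap.ext fun v => ?_
  have hdet : 1 - cos (π / Cm a b) ^ 2 ≠ 0 := by
    rw [← sin_sq_add_cos_sq (π / Cm a b), add_sub_cancel_right]
    exact pow_ne_zero 2 hsin
  have hba : Cm.geomForm b (single a 1) = -cos (π / Cm a b) := by rw [geomForm_single, Cm.symmetric]
  obtain ⟨x, y, hua, hub⟩ : ∃ x y : ℝ, Cm.geomForm a (v - x • single a 1 - y • single b 1) = 0 ∧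
      Cm.geomForm b (v - x • single a 1 - y • single b 1) = 0 := by
    refine ⟨(Cm.geomForm a v + cos (π / Cm a b) * Cm.geomForm b v) / (1 - cos (π / Cm a b) ^ 2),
      (Cm.geomForm b v + cos (π / Cm a b) * Cm.geomForm a v) / (1 - cos (π / Cm a b) ^ 2),
      ?_, ?_⟩ <;>
    · simp only [map_sub, map_smul, geomForm_single_self, geomForm_single, hba, smul_eq_mul]
      field_simp
      ring
  have hv : v = x • single a 1 + y • single b 1 + (v - x • single a 1 - y • single b 1) := by
    module
  rw [Module.End.one_apply, hv, map_add, map_add, map_smul, map_smul, ha, hb, hker _ hua hub]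

theorem geomReflection_mul_pow_ne_one {n : ℕ} (h0 : 0 < n) (hn : n < Cm a b) :
    (Cm.geomReflection a * Cm.geomReflection b) ^ n ≠ 1 := by
  have hab : a ≠ b := by
    rintro rfl
    rw [Cm.diagonal] at hn
    omega
  intro h
  have horbit := Cm.geomReflection_mul_pow_dihedralVec a b n (-(n * (π / Cm a b)))
  rw [h, Module.End.one_apply,
    show -(n * (π / Cm a b)) + 2 * n * (π / Cm a b) = n * (π / Cm a b) by ring] at horbit
  have hcoord := congrArg (· a) horbit
  simp only [dihedralVec_apply_left Cm hab, sin_neg] at hcoord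
  linarith [sin_mul_pi_div_pos h0 hn]

end Dihedral

theorem isLiftable_geomReflection : Cm.IsLiftable Cm.geomReflection := by
  intro a b
  rcases eq_or_ne a b with rfl | hab
  · rw [Cm.diagonal, pow_one, geomReflection_mul_self]
  rcases Nat.eq_zero_or_pos (Cm a b) with h0 | hpos
  · rw [h0, pow_zero]
  have hm : 1 < Cm a b := lt_of_le_of_ne hpos (Cm.off_diagonal a b hab).symm
  have hsin : sin (π / Cm a b) ≠ 0 := by
    simpa using (sin_mul_pi_div_pos one_pos hm).ne'
  have hfix : ∀ x, ((Cm.geomReflection a * Cm.geomReflection b) ^ Cm a b)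
      (Cm.dihedralVec a b x) = Cm.dihedralVec a b x := fun x => by
    rw [geomReflection_mul_pow_dihedralVec, mul_assoc, mul_div_cancel₀ _ (by positivity),
      dihedralVec_add_two_pi]
  apply Cm.eq_one_of_fixes_plane_and_ker a b hsin
  · have h := hfix (π / Cm a b)
    rw [dihedralVec, sub_self, sin_zero, zero_smul, add_zero, map_smul] at h
    exact smul_right_injective _ hsin h
  · have h := hfix 0
    rw [dihedralVec, sin_zero, zero_smul, zero_add, zero_sub, sin_neg, map_smul] at h
    exact smul_right_injective _ (neg_ne_zero.mpr hsin) h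
  · intro v ha hb
    have hT : (Cm.geomReflection a * Cm.geomReflection b) v = v := by
      rw [Module.End.mul_apply, geomReflection_of_geomForm_eq_zero Cm hb,
        geomReflection_of_geomForm_eq_zero Cm ha]
    rw [Module.End.pow_apply, Function.iterate_fixed hT]

end CoxeterMatrix

namespace CoxeterSystem

open List

local prefix:100 "s " => cs.simple
local prefix:100 "π " => cs.wordProd
local prefix:100 "ris " => cs.rightInvSeq

theorem simple_mul_simple_pow_ne_one {i i' : B} {n : ℕ} (h0 : 0 < n) (hn : n < Cm i i') :
    (s i * s i') ^ n ≠ 1 := by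
  intro h
  have h' := congrArg (cs.lift ⟨Cm.geomReflection, Cm.isLiftable_geomReflection⟩) h
  rw [map_pow, map_mul, lift_apply_simple, lift_apply_simple, map_one] at h'
  exact Cm.geomReflection_mul_pow_ne_one i i' h0 hn h'

theorem rightInvSeq_append (ω ω' : List B) :
    ris (ω ++ ω') = (ris ω).map (MulAut.conj (π ω')⁻¹) ++ ris ω' := by
  induction ω with
  | nil => simp
  | cons i ω ih =>
    simp only [cons_append, rightInvSeq, ih, map_cons, wordProd_append, MulAut.conj_apply, inv_inv]
    congr 1
    group

theorem rightInvSeq_alternatingWord (i i' : B) (k : ℕ) :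
    ris (alternatingWord i i' k) = ((range k).map fun q => (s i' * s i) ^ q * s i').reverse := by
  induction k generalizing i i' with
  | zero => simp [alternatingWord]
  | succ k ih =>
    rw [alternatingWord_succ, rightInvSeq_concat, ih, range_succ_eq_map, map_cons, reverse_cons,
      map_reverse, map_map, map_map, concat_eq_append, pow_zero, one_mul]
    congr 3
    funext q
    simp only [Function.comp_apply, MulAut.conj_apply, inv_simple, pow_succ, mul_assoc]
    rw [← mul_assoc _ (s i'), mul_pow_mul, mul_assoc]

theorem alternatingWord_two_mul_succ (i i' : B) (n : ℕ) :
    alternatingWord i i' (2 * (n + 1)) = i :: i' :: alternatingWord i i' (2 * n) := by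
  rw [show 2 * (n + 1) = 2 * n + 1 + 1 by ring, alternatingWord_succ', alternatingWord_succ']
  simp [parity_simps]

section Parity

variable [DecidableEq W]

def simpleFlip (i : B) : Function.End (W × ZMod 2) :=
  fun p => (s i * p.1 * s i, p.2 + if p.1 = s i then 1 else 0)

def wordFlip (ω : List B) : Function.End (W × ZMod 2) :=
  fun p => (π ω * p.1 * (π ω)⁻¹, p.2 + (ris ω).count p.1)

theorem wordFlip_cons (i : B) (ω : List B) :
    cs.wordFlip (i :: ω) = cs.simpleFlip i * cs.wordFlip ω := by
  funext ⟨t, z⟩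
  show _ = cs.simpleFlip i (cs.wordFlip ω (t, z))
  have hconj : π ω * t * (π ω)⁻¹ = s i ↔ (π ω)⁻¹ * s i * π ω = t := by
    constructor <;> intro h <;> rw [← h] <;> group
  simp only [wordFlip, simpleFlip, wordProd_cons, rightInvSeq, count_cons, beq_iff_eq, hconj]
  refine Prod.ext ?_ ?_
  · simp only [mul_inv_rev, inv_simple]
    group
  · push_cast
    ring

theorem wordFlip_eq_prod (ω : List B) : cs.wordFlip ω = (ω.map cs.simpleFlip).prod := by
  induction ω with
  | nil => funext ⟨t, z⟩; simp [wordFlip, Function.End.one_def]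
  | cons i ω ih => rw [wordFlip_cons, ih, map_cons, prod_cons]

theorem count_rightInvSeq_alternatingWord_two_mul (i i' : B) (t : W) :
    ((ris (alternatingWord i i' (2 * Cm i i'))).count t : ZMod 2) = 0 := by
  have hper : ∀ q, (s i' * s i) ^ (Cm i i' + q) * s i' = (s i' * s i) ^ q * s i' := fun q => by
    rw [pow_add, simple_mul_simple_pow', one_mul]
  rw [rightInvSeq_alternatingWord, count_reverse, two_mul, range_add, map_append, map_map,
    count_append]
  simp only [Function.comp_def, hper]
  push_cast
  exact CharTwo.add_self_eq_zero _

theorem simpleFlip_mul_pow (i i' : B) (n : ℕ) :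
    (cs.simpleFlip i * cs.simpleFlip i') ^ n = cs.wordFlip (alternatingWord i i' (2 * n)) := by
  induction n with
  | zero => funext ⟨t, z⟩; simp [wordFlip, alternatingWord, Function.End.one_def]
  | succ n ih => rw [pow_succ', ih, alternatingWord_two_mul_succ, wordFlip_cons, wordFlip_cons,
      mul_assoc]

theorem isLiftable_simpleFlip : Cm.IsLiftable cs.simpleFlip := by
  intro i i'
  funext ⟨t, z⟩
  have hprod : π (alternatingWord i i' (2 * Cm i i')) = 1 := by
    rw [prod_alternatingWord_eq_mul_pow]
    simp
  simp [simpleFlip_mul_pow, wordFlip, hprod, count_rightInvSeq_alternatingWord_two_mul,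
    Function.End.one_def]

def flipHom : W →* Function.End (W × ZMod 2) :=
  cs.lift ⟨cs.simpleFlip, cs.isLiftable_simpleFlip⟩

theorem flipHom_wordProd (ω : List B) : cs.flipHom (π ω) = cs.wordFlip ω := by
  rw [wordFlip_eq_prod, wordProd, map_list_prod, map_map]
  congr 2
  funext i
  exact cs.lift_apply_simple _ i

/-- The parity of the number of occurrences of `t` in the right inversion sequence of any word
for `w` (see `rightInvParity_wordProd`). -/
def rightInvParity (w t : W) : ZMod 2 := (cs.flipHom w (t, 0)).2

theorem rightInvParity_wordProd (ω : List B) (t : W) :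
    cs.rightInvParity (π ω) t = (ris ω).count t := by
  simp [rightInvParity, flipHom_wordProd, wordFlip]

theorem flipHom_apply (w t : W) (z : ZMod 2) :
    cs.flipHom w (t, z) = (w * t * w⁻¹, z + cs.rightInvParity w t) := by
  obtain ⟨ω, rfl⟩ := cs.wordProd_surjective w
  rw [rightInvParity_wordProd, flipHom_wordProd]
  rfl

theorem rightInvParity_mul (u v t : W) :
    cs.rightInvParity (u * v) t = cs.rightInvParity v t + cs.rightInvParity u (v * t * v⁻¹) := by
  have h : cs.flipHom (u * v) (t, 0) = cs.flipHom u (cs.flipHom v (t, 0)) := by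
    rw [map_mul]
    rfl
  rw [flipHom_apply, flipHom_apply, flipHom_apply] at h
  simpa using congrArg Prod.snd h

theorem rightInvParity_one (t : W) : cs.rightInvParity 1 t = 0 := by
  simpa using cs.rightInvParity_wordProd [] t

theorem rightInvParity_simple_self (i : B) : cs.rightInvParity (s i) (s i) = 1 := by
  simpa using cs.rightInvParity_wordProd [i] (s i)

theorem rightInvParity_self_of_isReflection {t : W} (ht : cs.IsReflection t) :
    cs.rightInvParity t t = 1 := by
  obtain ⟨u, i, rfl⟩ := ht
  have hinv : cs.rightInvParity u⁻¹ (u * s i * u⁻¹) = cs.rightInvParity u (s i) := by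
    have h := cs.rightInvParity_mul u u⁻¹ (u * s i * u⁻¹)
    rw [mul_inv_cancel, rightInvParity_one, inv_inv, show u⁻¹ * (u * s i * u⁻¹) * u = s i by
      group] at h
    rw [← CharTwo.neg_eq (cs.rightInvParity u (s i))]
    exact eq_neg_of_add_eq_zero_left h.symm
  calc cs.rightInvParity (u * s i * u⁻¹) (u * s i * u⁻¹)
      = cs.rightInvParity u⁻¹ (u * s i * u⁻¹) + cs.rightInvParity (u * s i) (s i) := by
        rw [rightInvParity_mul, show u⁻¹ * (u * s i * u⁻¹) * u⁻¹⁻¹ = s i by group]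
    _ = cs.rightInvParity u (s i) + (1 + cs.rightInvParity u (s i)) := by
        rw [hinv, rightInvParity_mul, rightInvParity_simple_self, simple_mul_simple_self, one_mul,
          inv_simple]
    _ = 1 := by rw [add_left_comm, CharTwo.add_self_eq_zero, add_zero]

theorem rightInvParity_of_isRightInversion {w t : W} (ht : cs.IsRightInversion w t) :
    cs.rightInvParity w t = 1 := by
  obtain ⟨ω, hω, hwt⟩ := cs.exists_isReduced (w * t)
  have hw : w * t * t = w := by rw [mul_assoc, ht.1.mul_self, mul_one]
  have hnot : t ∉ ris ω := fun hmem => by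
    have h := (cs.isRightInversion_of_mem_rightInvSeq hω hmem).2
    rw [← hwt, hw] at h
    exact lt_asymm h ht.2
  have h := cs.rightInvParity_mul (w * t) t t
  rw [hw, show t * t * t⁻¹ = t by rw [ht.1.mul_self, one_mul, ht.1.inv],
    rightInvParity_self_of_isReflection cs ht.1, hwt, rightInvParity_wordProd,
    count_eq_zero_of_not_mem hnot] at h
  simpa using h

end Parity

/-- The strong exchange condition. -/
theorem mem_rightInvSeq_of_isRightInversion {ω : List B} {t : W}
    (ht : cs.IsRightInversion (π ω) t) : t ∈ ris ω := by
  classical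
  have h := cs.rightInvParity_of_isRightInversion ht
  rw [rightInvParity_wordProd] at h
  by_contra hmem
  simp [count_eq_zero_of_not_mem hmem] at h

theorem exists_eraseIdx_of_mem_rightInvSeq {ω : List B} {t : W} (ht : t ∈ ris ω) :
    ∃ j < ω.length, π ω * t = π (ω.eraseIdx j) := by
  obtain ⟨j, hj, rfl⟩ := List.mem_iff_getElem.mp ht
  rw [length_rightInvSeq] at hj
  refine ⟨j, hj, ?_⟩
  rw [← getD_eq_getElem _ 1, wordProd_mul_getD_rightInvSeq]

theorem exists_isReduced_append_alternatingWord_succ {ω : List B} {i i' : B} {k : ℕ}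
    (hk : k < Cm i i') (hω : cs.IsReduced (ω ++ alternatingWord i' i k))
    (hi' : cs.IsRightDescent (π (ω ++ alternatingWord i' i k)) i') :
    ∃ ω', cs.IsReduced (ω' ++ alternatingWord i i' (k + 1)) ∧
      π (ω' ++ alternatingWord i i' (k + 1)) = π (ω ++ alternatingWord i' i k) := by
  have hmem := cs.mem_rightInvSeq_of_isRightInversion
    ((cs.isRightInversion_simple_iff_isRightDescent _ _).mpr hi')
  rw [rightInvSeq_append, mem_append, mem_map] at hmem
  rcases hmem with ⟨t, ht, hts⟩ | hmem
  · obtain ⟨j, hj, hjt⟩ := cs.exists_eraseIdx_of_mem_rightInvSeq ht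
    have ht' : t = π (alternatingWord i' i k) * s i' * (π (alternatingWord i' i k))⁻¹ := by
      rw [← hts, MulAut.conj_apply]
      group
    have hprod : π (ω.eraseIdx j ++ alternatingWord i i' (k + 1)) =
        π (ω ++ alternatingWord i' i k) := by
      rw [alternatingWord_succ, concat_eq_append, ← append_assoc, wordProd_append,
        wordProd_append, wordProd_singleton, ← hjt, ht', wordProd_append]
      group
      rw [simple_mul_simple_cancel_right]
    refine ⟨ω.eraseIdx j, ?_, hprod⟩
    rw [IsReduced, hprod, hω.eq]
    simp only [length_append, length_alternatingWord]
    have := length_eraseIdx_add_one hj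
    omega
  · exfalso
    rw [rightInvSeq_alternatingWord, mem_reverse, mem_map] at hmem
    obtain ⟨q, hq, hqs⟩ := hmem
    apply cs.simple_mul_simple_pow_ne_one q.succ_pos (lt_of_le_of_lt (mem_range.mp hq) hk)
    rw [pow_succ, ← mul_assoc, hqs, simple_mul_simple_self]

theorem exists_isReduced_append_alternatingWord {w : W} {i i' : B} (hi : cs.IsRightDescent w i)
    (hi' : cs.IsRightDescent w i') {k : ℕ} (hk : k ≤ Cm i i') :
    ∃ ω, cs.IsReduced (ω ++ alternatingWord i i' k) ∧ π (ω ++ alternatingWord i i' k) = w := by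
  induction k generalizing i i' with
  | zero =>
    obtain ⟨ω, hω, rfl⟩ := cs.exists_isReduced w
    exact ⟨ω, by simpa [alternatingWord] using hω, by simp [alternatingWord]⟩
  | succ k ih =>
    obtain ⟨ω, hω, rfl⟩ := ih hi' hi (by rw [Cm.symmetric]; omega)
    exact cs.exists_isReduced_append_alternatingWord_succ hk hω hi'

end CoxeterSystem

theorem reduced_word_ending_in_braid (w : W) (i i' : B) (hi : cs.IsRightDescent w i)
    (hi' : cs.IsRightDescent w i') :
    ∃ ω' : List B, cs.IsReduced (ω' ++ alternatingWord i i' (Cm i i')) ∧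
      cs.wordProd (ω' ++ alternatingWord i i' (Cm i i')) = w :=
  cs.exists_isReduced_append_alternatingWord hi hi' le_rfl
end

section
/- Let W be a Coxeter group with Bruhat order, w ∈ W, M a special matching of the interval [e,w], and N a multiplication matching ρ_s or λ_s of [e,w] (for s a right resp. left descent of w). Suppose M(w) ≠ N(w). If there exists x ≤ w with M(N(x)) ≠ N(M(x)), then there exists x ≤ w with M(x) ⋖ x, N(x) ⋖ x, and M(N(x)) ≠ N(M(x)). -/
open CoxeterSystem

variable {B W : Type*} [Group W] {Cm : CoxeterMatrix B} (cs : CoxeterSystem Cm W)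

namespace BruhatAux

variable [DecidableEq W]


/-- The sign-twisted conjugation function on `W × ℤˣ`. -/
def sgnFun (i : B) (x : W × ℤˣ) : W × ℤˣ :=
  (cs.simple i * x.1 * cs.simple i, (if x.1 = cs.simple i then -1 else 1) * x.2)

lemma sgnFun_invol (i : B) (x : W × ℤˣ) : sgnFun cs i (sgnFun cs i x) = x := by
  obtain ⟨u, ε⟩ := x
  have h1 : cs.simple i * u * cs.simple i = cs.simple i ↔ u = cs.simple i := by
    constructor
    · intro h
      have := congrArg (fun z => cs.simple i * z * cs.simple i) h
      simpa [mul_assoc, cs.simple_mul_simple_cancel_left, cs.simple_mul_simple_cancel_right]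
        using this
    · rintro rfl; simp [cs.simple_mul_simple_cancel_right]
  by_cases h : u = cs.simple i
  · simp [sgnFun, h1, h, mul_assoc, cs.simple_mul_simple_cancel_left,
      cs.simple_mul_simple_cancel_right]
  · have h2 : ¬ u * cs.simple i = 1 := fun h2 => h (by
      rw [← cs.inv_simple]; exact eq_inv_of_mul_eq_one_left h2)
    simp [sgnFun, h1, h, h2, mul_assoc, cs.simple_mul_simple_cancel_left,
      cs.simple_mul_simple_cancel_right]

/-- The sign-twisted conjugation permutation. -/
def sgn (i : B) : Equiv.Perm (W × ℤˣ) :=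
  ⟨sgnFun cs i, sgnFun cs i, fun x => sgnFun_invol cs i x, fun x => sgnFun_invol cs i x⟩

lemma sgn_apply (i : B) (u : W) (ε : ℤˣ) :
    sgn cs i (u, ε) = (cs.simple i * u * cs.simple i, (if u = cs.simple i then -1 else 1) * ε) :=
  rfl


lemma simple_mul_pow (i j : B) (k : ℕ) :
    cs.simple j * (cs.simple i * cs.simple j) ^ k
      = (cs.simple j * cs.simple i) ^ k * cs.simple j := by
  induction k with
  | zero => simp
  | succ k ih =>
    rw [pow_succ, ← mul_assoc, ih, pow_succ]
    group

lemma inv_simple_mul_pow (i j : B) (k : ℕ) :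
    ((cs.simple i * cs.simple j) ^ k)⁻¹ = (cs.simple j * cs.simple i) ^ k := by
  rw [← inv_pow, mul_inv_rev, cs.inv_simple, cs.inv_simple]

lemma conj_eq_iff (g v a : W) : g * v * g⁻¹ = a ↔ v = g⁻¹ * a * g := by
  constructor
  · intro h; rw [← h]; group
  · intro h; rw [h]; group

lemma conjA (i j : B) (k : ℕ) :
    ((cs.simple i * cs.simple j) ^ k)⁻¹ * cs.simple j * (cs.simple i * cs.simple j) ^ k
      = (cs.simple j * cs.simple i) ^ (2 * k) * cs.simple j := by
  rw [inv_simple_mul_pow, mul_assoc, simple_mul_pow cs i j, ← mul_assoc, ← pow_add, two_mul]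

lemma conjB (i j : B) (k : ℕ) :
    ((cs.simple i * cs.simple j) ^ k)⁻¹ * (cs.simple j * cs.simple i * cs.simple j)
        * (cs.simple i * cs.simple j) ^ k
      = (cs.simple j * cs.simple i) ^ (2 * k + 1) * cs.simple j := by
  rw [inv_simple_mul_pow]
  calc (cs.simple j * cs.simple i) ^ k * (cs.simple j * cs.simple i * cs.simple j)
        * (cs.simple i * cs.simple j) ^ k
      = (cs.simple j * cs.simple i) ^ (k + 1) * (cs.simple j * (cs.simple i * cs.simple j) ^ k) := by
        rw [pow_succ]; group
    _ = (cs.simple j * cs.simple i) ^ (k + 1) * ((cs.simple j * cs.simple i) ^ k * cs.simple j) := by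
        rw [simple_mul_pow cs i j]
    _ = (cs.simple j * cs.simple i) ^ (2 * k + 1) * cs.simple j := by
        rw [← mul_assoc, ← pow_add]; ring_nf

lemma simple_conj_eq_iff (j : B) (x a : W) :
    cs.simple j * x * cs.simple j = a ↔ x = cs.simple j * a * cs.simple j := by
  constructor
  · intro h
    have := congrArg (fun z => cs.simple j * z * cs.simple j) h
    simpa [mul_assoc, cs.simple_mul_simple_cancel_left, cs.simple_mul_simple_cancel_right]
      using this
  · rintro rfl
    simp [mul_assoc, cs.simple_mul_simple_cancel_left, cs.simple_mul_simple_cancel_right]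

lemma sgn_pow_apply (i j : B) (k : ℕ) (u : W) (ε : ℤˣ) :
    ((sgn cs i * sgn cs j) ^ k) (u, ε) =
      ((cs.simple i * cs.simple j) ^ k * u * ((cs.simple i * cs.simple j) ^ k)⁻¹,
        (-1 : ℤˣ) ^ ((List.range (2 * k)).countP
          (fun l => decide (u = (cs.simple j * cs.simple i) ^ l * cs.simple j))) * ε) := by
  induction k with
  | zero => simp
  | succ k ih =>
    have hC1 : ((cs.simple i * cs.simple j) ^ k * u * ((cs.simple i * cs.simple j) ^ k)⁻¹
        = cs.simple j) ↔ (u = (cs.simple j * cs.simple i) ^ (2 * k) * cs.simple j) := by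
      rw [conj_eq_iff, conjA]
    have hC2 : (cs.simple j * ((cs.simple i * cs.simple j) ^ k * u
          * ((cs.simple i * cs.simple j) ^ k)⁻¹) * cs.simple j = cs.simple i)
        ↔ (u = (cs.simple j * cs.simple i) ^ (2 * k + 1) * cs.simple j) := by
      rw [simple_conj_eq_iff, conj_eq_iff]
      rw [show ((cs.simple i * cs.simple j) ^ k)⁻¹ * (cs.simple j * cs.simple i * cs.simple j)
          * (cs.simple i * cs.simple j) ^ k
          = (cs.simple j * cs.simple i) ^ (2 * k + 1) * cs.simple j from conjB cs i j k]
    rw [pow_succ', Equiv.Perm.mul_apply, ih, Equiv.Perm.mul_apply, sgn_apply, sgn_apply]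
    have hrange : List.range (2 * (k + 1)) = List.range (2 * k) ++ [2 * k] ++ [2 * k + 1] := by
      rw [show 2 * (k + 1) = (2 * k + 1) + 1 by ring, List.range_succ, List.range_succ]
    refine Prod.ext ?_ ?_
    · dsimp only
      have h3 : ∀ X : W, cs.simple i * (cs.simple j * X * cs.simple j) * cs.simple i
          = (cs.simple i * cs.simple j) * X * (cs.simple i * cs.simple j)⁻¹ := by
        intro X
        rw [mul_inv_rev, cs.inv_simple, cs.inv_simple]
        simp [mul_assoc]
      rw [h3, pow_succ' (cs.simple i * cs.simple j) k, mul_inv_rev]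
      simp [mul_assoc]
    · dsimp only
      rw [hrange, List.countP_append, List.countP_append]
      simp only [List.countP_cons, List.countP_nil, decide_eq_true_eq, Nat.zero_add, zero_add,
        hC1, hC2]
      by_cases h1 : u = (cs.simple j * cs.simple i) ^ (2 * k) * cs.simple j <;>
      by_cases h2 : u = (cs.simple j * cs.simple i) ^ (2 * k + 1) * cs.simple j <;>
        simp only [if_pos, if_neg, h1, h2, if_true, if_false] <;>
        simp [pow_succ, pow_add, mul_comm, mul_left_comm, mul_assoc]

lemma sgn_liftable : Cm.IsLiftable (fun i => sgn cs i) := by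
  intro i j
  rcases Nat.eq_zero_or_pos (Cm i j) with h0 | hpos
  · rw [h0, pow_zero]
  · apply Equiv.ext
    rintro ⟨u, ε⟩
    have hp : (cs.simple i * cs.simple j) ^ Cm i j = 1 := cs.simple_mul_simple_pow i j
    have hq : (cs.simple j * cs.simple i) ^ Cm i j = 1 := cs.simple_mul_simple_pow' i j
    have hsplit : List.range (2 * Cm i j)
        = List.range (Cm i j) ++ (List.range (Cm i j)).map (Cm i j + ·) := by
      rw [two_mul, List.range_add]
    have hcount : (List.range (2 * Cm i j)).countP
        (fun l => decide (u = (cs.simple j * cs.simple i) ^ l * cs.simple j))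
        = 2 * (List.range (Cm i j)).countP
            (fun l => decide (u = (cs.simple j * cs.simple i) ^ l * cs.simple j)) := by
      rw [hsplit, List.countP_append, List.countP_map]
      have heq : List.countP
          ((fun l => decide (u = (cs.simple j * cs.simple i) ^ l * cs.simple j))
            ∘ (fun x => Cm i j + x)) (List.range (Cm i j))
          = List.countP (fun l => decide (u = (cs.simple j * cs.simple i) ^ l * cs.simple j))
            (List.range (Cm i j)) := by
        apply List.countP_congr
        intro a _
        simp only [Function.comp_apply, decide_eq_decide, pow_add, hq, one_mul]
      rw [heq, two_mul]
    rw [sgn_pow_apply, hp, hcount]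
    simp [pow_mul]

/-- The sign representation of the Coxeter group on `W × ℤˣ`. -/
noncomputable def phi : W →* Equiv.Perm (W × ℤˣ) := cs.lift ⟨fun i => sgn cs i, sgn_liftable cs⟩

lemma phi_simple (i : B) : phi cs (cs.simple i) = sgn cs i := cs.lift_apply_simple _ i

lemma phi_wordProd (ω : List B) (u : W) (ε : ℤˣ) :
    phi cs (cs.wordProd ω) (u, ε) =
      (cs.wordProd ω * u * (cs.wordProd ω)⁻¹,
        (-1 : ℤˣ) ^ ((cs.rightInvSeq ω).count u) * ε) := by
  induction ω with
  | nil => simp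
  | cons i ω ih =>
    rw [cs.wordProd_cons, map_mul, Equiv.Perm.mul_apply, ih, phi_simple, sgn_apply]
    rw [show cs.rightInvSeq (i :: ω)
        = ((cs.wordProd ω)⁻¹ * cs.simple i * cs.wordProd ω) :: cs.rightInvSeq ω from rfl]
    rw [List.count_cons]
    refine Prod.ext ?_ ?_
    · dsimp only
      rw [mul_inv_rev, cs.inv_simple]
      simp [mul_assoc]
    · dsimp only
      have hcond := (conj_eq_iff (cs.wordProd ω) u (cs.simple i)).trans eq_comm
      rw [if_congr hcond rfl rfl]
      simp only [beq_iff_eq]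
      by_cases h : (cs.wordProd ω)⁻¹ * cs.simple i * cs.wordProd ω = u
      · rw [if_pos h, if_pos h]
        simp [pow_succ, mul_comm, mul_left_comm, mul_assoc]
      · rw [if_neg h, if_neg h]
        simp

/-- The sign cocycle. -/
noncomputable def nsgn (w u : W) : ℤˣ := (phi cs w (u, 1)).2

lemma phi_apply (w u : W) (ε : ℤˣ) : phi cs w (u, ε) = (w * u * w⁻¹, nsgn cs w u * ε) := by
  obtain ⟨ω, _, hw⟩ := cs.exists_reduced_word' w
  subst hw
  rw [phi_wordProd, nsgn, phi_wordProd]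
  simp

lemma nsgn_refl_self {t : W} (ht : cs.IsReflection t) : nsgn cs t t = -1 := by
  obtain ⟨v, i, rfl⟩ := ht
  have h2 : phi cs v⁻¹ (v * cs.simple i * v⁻¹, 1)
      = (cs.simple i, nsgn cs v⁻¹ (v * cs.simple i * v⁻¹)) := by
    rw [phi_apply]
    refine Prod.ext ?_ ?_ <;> simp [mul_assoc]
  have h3 : nsgn cs v⁻¹ (v * cs.simple i * v⁻¹) * nsgn cs v (cs.simple i) = 1 := by
    have h5 : phi cs v⁻¹ (phi cs v (cs.simple i, 1)) = (cs.simple i, 1) := by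
      rw [← Equiv.Perm.mul_apply, ← map_mul, inv_mul_cancel, map_one, Equiv.Perm.one_apply]
    rw [phi_apply, phi_apply] at h5
    have h6 := congrArg Prod.snd h5
    dsimp at h6
    simpa using h6
  have key : phi cs (v * cs.simple i * v⁻¹) (v * cs.simple i * v⁻¹, 1)
      = (v * cs.simple i * v⁻¹,
          nsgn cs v (cs.simple i) * (-nsgn cs v⁻¹ (v * cs.simple i * v⁻¹))) := by
    rw [map_mul, map_mul, Equiv.Perm.mul_apply, Equiv.Perm.mul_apply, h2, phi_simple, sgn_apply,
      if_pos rfl, cs.simple_mul_simple_cancel_right, phi_apply]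
    congr 1
    rw [neg_mul, one_mul]
  have h7 := congrArg Prod.snd key
  dsimp at h7
  rw [nsgn, h7, mul_neg, mul_comm (nsgn cs v (cs.simple i)), h3]

lemma nsgn_mul_refl (w : W) {t : W} (ht : cs.IsReflection t) :
    nsgn cs (w * t) t = - nsgn cs w t := by
  have h0 : phi cs t (t, 1) = (t, -1) := by
    rw [phi_apply, nsgn_refl_self cs ht, mul_one]
    congr 1
    rw [ht.mul_self, one_mul, ht.inv]
  have h1 : phi cs (w * t) (t, 1) = (w * t * t * (w * t)⁻¹, nsgn cs (w * t) t) := by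
    rw [phi_apply, mul_one]
  have h2 : phi cs (w * t) (t, 1) = (w * t * t * (w * t)⁻¹, nsgn cs w t * (-1)) := by
    rw [map_mul, Equiv.Perm.mul_apply, h0, phi_apply]
    congr 1
    rw [mul_inv_rev]
    simp [mul_assoc]
  have h3 := congrArg Prod.snd (h1.symm.trans h2)
  dsimp at h3
  simpa using h3

lemma length_lt_of_nsgn_neg {w t : W} (ht : cs.IsReflection t) (h : nsgn cs w t = -1) :
    cs.length (w * t) < cs.length w := by
  obtain ⟨ω, hred, hw⟩ := cs.exists_reduced_word' w
  subst hw
  have h1 : nsgn cs (cs.wordProd ω) t = (-1 : ℤˣ) ^ ((cs.rightInvSeq ω).count t) := by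
    have := phi_wordProd cs ω t 1
    rw [mul_one] at this
    rw [nsgn, this]
  have hmem : t ∈ cs.rightInvSeq ω := by
    by_contra hmem
    rw [List.count_eq_zero_of_not_mem hmem, pow_zero] at h1
    rw [h1] at h
    exact absurd h (by decide)
  exact (cs.isRightInversion_of_mem_rightInvSeq hred hmem).2

lemma nsgn_neg_of_descent {w t : W} (ht : cs.IsReflection t)
    (h : cs.length (w * t) < cs.length w) : nsgn cs w t = -1 := by
  rcases Int.units_eq_one_or (nsgn cs w t) with h1 | h1
  · exfalso
    have h2 : nsgn cs (w * t) t = -1 := by rw [nsgn_mul_refl cs w ht, h1]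
    have h3 := length_lt_of_nsgn_neg cs ht h2
    rw [mul_assoc, ht.mul_self, mul_one] at h3
    omega
  · exact h1

/-- Strong exchange property (for arbitrary words). -/
lemma strong_exchange (ω : List B) {t : W} (ht : cs.IsReflection t)
    (h : cs.length (cs.wordProd ω * t) < cs.length (cs.wordProd ω)) :
    ∃ j < ω.length, cs.wordProd ω * t = cs.wordProd (ω.eraseIdx j) := by
  have h1 : nsgn cs (cs.wordProd ω) t = -1 := nsgn_neg_of_descent cs ht h
  have h2 : nsgn cs (cs.wordProd ω) t = (-1 : ℤˣ) ^ ((cs.rightInvSeq ω).count t) := by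
    have := phi_wordProd cs ω t 1
    rw [mul_one] at this
    rw [nsgn, this]
  have hmem : t ∈ cs.rightInvSeq ω := by
    by_contra hmem
    rw [List.count_eq_zero_of_not_mem hmem, pow_zero] at h2
    rw [h2] at h1
    exact absurd h1 (by decide)
  obtain ⟨j, hj, hget⟩ := List.mem_iff_getElem.mp hmem
  have hj' : j < ω.length := by simpa using hj
  refine ⟨j, hj', ?_⟩
  rw [show t = (cs.rightInvSeq ω).getD j 1 by rw [List.getD_eq_getElem _ 1 hj, hget]]
  exact cs.wordProd_mul_getD_rightInvSeq ω j

lemma length_le_of_le {u w : W} (h : bruhatLE cs u w) : cs.length u ≤ cs.length w := by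
  induction h with
  | refl => exact le_rfl
  | tail _ h2 ih => exact le_trans ih (le_of_lt h2.2)

lemma bruhat_step {u t : W} (ht : cs.IsReflection t) (hl : cs.length u < cs.length (u * t)) :
    bruhatLE cs u (u * t) :=
  Relation.ReflTransGen.single ⟨⟨t, ht, rfl⟩, hl⟩

lemma bruhat_left_step {i : B} {w : W} (h : cs.length w < cs.length (cs.simple i * w)) :
    bruhatLE cs w (cs.simple i * w) := by
  have ht : cs.IsReflection (w⁻¹ * cs.simple i * w) := by
    have := (cs.isReflection_simple i).conj w⁻¹
    simpa using this
  exact Relation.ReflTransGen.single ⟨⟨w⁻¹ * cs.simple i * w, ht, by simp [mul_assoc]⟩, h⟩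

lemma bruhat_left_step' {i : B} {w : W} (h : cs.length (cs.simple i * w) < cs.length w) :
    bruhatLE cs (cs.simple i * w) w := by
  have h2 : cs.length (cs.simple i * w) < cs.length (cs.simple i * (cs.simple i * w)) := by
    rw [cs.simple_mul_simple_cancel_left]
    exact h
  have := bruhat_left_step cs h2
  rwa [cs.simple_mul_simple_cancel_left] at this

lemma bruhatLE_inv {u w : W} (h : bruhatLE cs u w) : bruhatLE cs u⁻¹ w⁻¹ := by
  induction h with
  | refl => exact Relation.ReflTransGen.refl
  | @tail c v hac h2 ih =>
    obtain ⟨⟨t, ht, rfl⟩, hlen⟩ := h2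
    refine Relation.ReflTransGen.tail ih ⟨⟨c * t * c⁻¹, ht.conj c, ?_⟩, ?_⟩
    · rw [mul_inv_rev, ht.inv]
      group
    · rwa [cs.length_inv, cs.length_inv]

/-- The joint lifting lemmas `L` and `L'`, by strong induction on the length of `w`. -/
lemma LL' (n : ℕ) : ∀ w : W, cs.length w = n →
    (∀ (i : B) (u : W), cs.length w < cs.length (cs.simple i * w) → bruhatLE cs u w →
        cs.length u < cs.length (cs.simple i * u) →
        bruhatLE cs (cs.simple i * u) (cs.simple i * w))
    ∧ (∀ (i : B) (u : W), cs.length (cs.simple i * w) < cs.length w → bruhatLE cs u w →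
        cs.length u < cs.length (cs.simple i * u) →
        bruhatLE cs (cs.simple i * u) w) := by
  induction n using Nat.strong_induction_on with
  | _ n IH =>
  intro w hw
  constructor
  · -- L : both ascents
    intro i u hiw hu hiu
    rcases Relation.ReflTransGen.cases_tail hu with heq | ⟨m, hum, hstep⟩
    · subst heq
      exact Relation.ReflTransGen.refl
    · obtain ⟨⟨t, ht, rfl⟩, hlt⟩ := hstep
      rcases lt_or_gt_of_ne (cs.length_simple_mul_ne m i) with hm | hm
      · -- descent at m : use L' at m, then m ≤ m * t ≤ s i * (m * t)
        have h1 : bruhatLE cs (cs.simple i * u) m :=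
          (IH (cs.length m) (by omega) m rfl).2 i u hm hum hiu
        exact h1.trans ((bruhat_step cs ht hlt).trans (bruhat_left_step cs hiw))
      · -- ascent at m : use L at m, then s i * m ≤ s i * (m * t)
        have h1 : bruhatLE cs (cs.simple i * u) (cs.simple i * m) :=
          (IH (cs.length m) (by omega) m rfl).1 i u hm hum hiu
        have hsm : cs.length (cs.simple i * m) = cs.length m + 1 := by
          rcases cs.length_simple_mul m i with h | h <;> omega
        have hsw : cs.length (cs.simple i * (m * t)) = cs.length (m * t) + 1 := by
          rcases cs.length_simple_mul (m * t) i with h | h <;> omega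
        have h2 : bruhatLE cs (cs.simple i * m) (cs.simple i * m * t) :=
          bruhat_step cs ht (by rw [mul_assoc, hsw]; omega)
        rw [mul_assoc] at h2
        exact h1.trans h2
  · -- L' : s i descends w, ascends u
    intro i u hiw hu hiu
    rcases Relation.ReflTransGen.cases_tail hu with heq | ⟨m, hum, hstep⟩
    · subst heq
      omega
    · obtain ⟨⟨t, ht, rfl⟩, hlt⟩ := hstep
      rcases lt_or_gt_of_ne (cs.length_simple_mul_ne m i) with hm | hm
      · -- descent at m : use L' at m, then m ≤ m * t
        have h1 : bruhatLE cs (cs.simple i * u) m :=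
          (IH (cs.length m) (by omega) m rfl).2 i u hm hum hiu
        exact h1.trans (bruhat_step cs ht hlt)
      · -- ascent at m : use L at m
        have h1 : bruhatLE cs (cs.simple i * u) (cs.simple i * m) :=
          (IH (cs.length m) (by omega) m rfl).1 i u hm hum hiu
        by_cases hmw : cs.simple i * m = m * t
        · rwa [hmw] at h1
        · have hsm : cs.length (cs.simple i * m) = cs.length m + 1 := by
            rcases cs.length_simple_mul m i with h | h <;> omega
          rcases Nat.lt_trichotomy (cs.length (cs.simple i * m))
              (cs.length (cs.simple i * (m * t))) with h2 | h2 | h2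
          · -- climb to s i * (m * t), then descend to m * t
            have step1 : bruhatLE cs (cs.simple i * m) (cs.simple i * m * t) :=
              bruhat_step cs ht (by rwa [mul_assoc])
            rw [mul_assoc] at step1
            exact h1.trans (step1.trans (bruhat_left_step' cs hiw))
          · -- impossible by parity
            exfalso
            have hpar := cs.length_mul_mod_two m t
            obtain ⟨c, hc⟩ := ht.odd_length
            have hsw : cs.length (cs.simple i * (m * t)) + 1 = cs.length (m * t) := by
              rcases cs.length_simple_mul (m * t) i with h | h <;> omega
            omega
          · -- impossible by the strong exchange property
            exfalso
            obtain ⟨μ, hμred, hμ⟩ := cs.exists_reduced_word' m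
            have hword : cs.wordProd (i :: μ) = cs.simple i * m := by
              rw [cs.wordProd_cons, ← hμ]
            have hlen : cs.length (cs.wordProd (i :: μ) * t) < cs.length (cs.wordProd (i :: μ)) := by
              rw [hword, mul_assoc]
              exact h2
            obtain ⟨j, hjlt, hj⟩ := strong_exchange cs (i :: μ) ht hlen
            rw [hword] at hj
            match j, hjlt with
            | 0, _ =>
              apply hmw
              rw [List.eraseIdx_cons_zero, ← hμ] at hj
              have := congrArg (· * t) hj
              simpa [mul_assoc, ht.mul_self] using this
            | (j' + 1), hjlt =>
              rw [List.eraseIdx_cons_succ, cs.wordProd_cons] at hj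
              have hj2 : m * t = cs.wordProd (μ.eraseIdx j') := by
                rw [mul_assoc] at hj
                exact mul_left_cancel hj
              have hj3 : j' < μ.length := by simpa using hjlt
              have hlen2 : cs.length (cs.wordProd (μ.eraseIdx j')) ≤ μ.length - 1 := by
                have := cs.length_wordProd_le (μ.eraseIdx j')
                have := List.length_eraseIdx_add_one hj3
                omega
              have hμlen : cs.length m = μ.length := by rw [hμ]; exact hμred
              have hlen3 := congrArg cs.length hj2
              omega

/-- Left version of the lifting property. -/
lemma left_lift {w : W} {i : B} (hw : cs.IsLeftDescent w i) {u : W} (hu : bruhatLE cs u w) :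
    bruhatLE cs (cs.simple i * u) w := by
  rcases lt_or_gt_of_ne (cs.length_simple_mul_ne u i) with h | h
  · exact (bruhat_left_step' cs h).trans hu
  · exact (LL' cs (cs.length w) w rfl).2 i u hw hu h

/-- Right version of the lifting property. -/
lemma right_lift {w : W} {i : B} (hw : cs.IsRightDescent w i) {u : W} (hu : bruhatLE cs u w) :
    bruhatLE cs (u * cs.simple i) w := by
  have h1 : cs.IsLeftDescent w⁻¹ i := cs.isLeftDescent_inv_iff.mpr hw
  have h2 := left_lift cs h1 (bruhatLE_inv cs hu)
  have h3 := bruhatLE_inv cs h2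
  rwa [mul_inv_rev, inv_inv, cs.inv_simple, inv_inv] at h3

end BruhatAux

/-- Let `M` be a special matching of the lower Bruhat interval `[e,w]` and `N` a
multiplication matching (`ρ_s` for a right descent or `λ_s` for a left descent of `w`)
with `M w ≠ N w`. If some `x ≤ w` has `M (N x) ≠ N (M x)`, then there is an `x ≤ w`
with `M x ⋖ x`, `N x ⋖ x` and `M (N x) ≠ N (M x)`. -/
theorem minimal_noncommuting_element (w : W) (Mm N : W → W)
    (hMclose : ∀ u : W, bruhatLE cs u w → bruhatLE cs (Mm u) w)
    (hMinv : ∀ u : W, bruhatLE cs u w → Mm (Mm u) = u)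
    (hMmatch : ∀ u : W, bruhatLE cs u w →
      bruhatCovBy cs (Mm u) u ∨ bruhatCovBy cs u (Mm u))
    (hMspecial : ∀ u v : W, bruhatLE cs u w → bruhatLE cs v w →
      bruhatCovBy cs u v → Mm u ≠ v → bruhatLE cs (Mm u) (Mm v))
    (hN : ∃ i : B,
      (cs.IsRightDescent w i ∧ ∀ u : W, bruhatLE cs u w → N u = u * cs.simple i) ∨
      (cs.IsLeftDescent w i ∧ ∀ u : W, bruhatLE cs u w → N u = cs.simple i * u))
    (hne : Mm w ≠ N w)
    (hex : ∃ x : W, bruhatLE cs x w ∧ Mm (N x) ≠ N (Mm x)) :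
    ∃ x : W, bruhatLE cs x w ∧ bruhatCovBy cs (Mm x) x ∧ bruhatCovBy cs (N x) x ∧
      Mm (N x) ≠ N (Mm x) := by
  classical
  obtain ⟨x0, hx0, hne0⟩ := hex
  obtain ⟨i, hNc⟩ := hN
  have hNclose : ∀ u : W, bruhatLE cs u w → bruhatLE cs (N u) w := by
    intro u hu
    rcases hNc with ⟨hdes, hform⟩ | ⟨hdes, hform⟩
    · rw [hform u hu]
      exact BruhatAux.right_lift cs hdes hu
    · rw [hform u hu]
      exact BruhatAux.left_lift cs hdes hu
  have hNinv : ∀ u : W, bruhatLE cs u w → N (N u) = u := by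
    intro u hu
    rcases hNc with ⟨hdes, hform⟩ | ⟨hdes, hform⟩
    · rw [hform (N u) (hNclose u hu), hform u hu, cs.simple_mul_simple_cancel_right]
    · rw [hform (N u) (hNclose u hu), hform u hu, cs.simple_mul_simple_cancel_left]
  have hNmatch : ∀ u : W, bruhatLE cs u w →
      bruhatCovBy cs (N u) u ∨ bruhatCovBy cs u (N u) := by
    intro u hu
    rcases hNc with ⟨hdes, hform⟩ | ⟨hdes, hform⟩
    · rw [hform u hu]
      rcases cs.length_mul_simple u i with h | h
      · right
        refine ⟨?_, h⟩
        rw [show u⁻¹ * (u * cs.simple i) = cs.simple i by group]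
        exact cs.isReflection_simple i
      · left
        refine ⟨?_, by omega⟩
        rw [show (u * cs.simple i)⁻¹ * u = cs.simple i by
          rw [mul_inv_rev, cs.inv_simple]; group]
        exact cs.isReflection_simple i
    · rw [hform u hu]
      rcases cs.length_simple_mul u i with h | h
      · right
        refine ⟨?_, h⟩
        have := (cs.isReflection_simple i).conj u⁻¹
        simpa [mul_assoc] using this
      · left
        refine ⟨?_, by omega⟩
        rw [mul_inv_rev, cs.inv_simple]
        have := (cs.isReflection_simple i).conj u⁻¹
        simpa [mul_assoc] using this
  suffices H : ∀ k : ℕ, ∀ x : W, bruhatLE cs x w → cs.length w - cs.length x = k →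
      Mm (N x) ≠ N (Mm x) →
      ∃ x : W, bruhatLE cs x w ∧ bruhatCovBy cs (Mm x) x ∧ bruhatCovBy cs (N x) x ∧
        Mm (N x) ≠ N (Mm x) by
    exact H _ x0 hx0 rfl hne0
  intro k
  induction k using Nat.strong_induction_on with
  | _ k IHk =>
  intro x hx hk hnex
  rcases hMmatch x hx with hMdown | hMup
  · rcases hNmatch x hx with hNdown | hNup
    · exact ⟨x, hx, hMdown, hNdown, hnex⟩
    · have hx' : bruhatLE cs (N x) w := hNclose x hx
      have hne' : Mm (N (N x)) ≠ N (Mm (N x)) := by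
        rw [hNinv x hx]
        intro hcon
        have h5 := congrArg N hcon
        rw [hNinv (Mm (N x)) (hMclose _ hx')] at h5
        exact hnex h5.symm
      have hlx : cs.length (N x) = cs.length x + 1 := hNup.2
      have hwx := BruhatAux.length_le_of_le cs hx'
      exact IHk (cs.length w - cs.length (N x)) (by omega) (N x) hx' rfl hne'
  · have hx' : bruhatLE cs (Mm x) w := hMclose x hx
    have hne' : Mm (N (Mm x)) ≠ N (Mm (Mm x)) := by
      rw [hMinv x hx]
      intro hcon
      have h5 := congrArg Mm hcon
      rw [hMinv (N (Mm x)) (hNclose _ hx')] at h5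
      exact hnex h5.symm
    have hlx : cs.length (Mm x) = cs.length x + 1 := hMup.2
    have hwx := BruhatAux.length_le_of_le cs hx'
    exact IHk (cs.length w - cs.length (Mm x)) (by omega) (Mm x) hx' rfl hne'
end
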